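/- arXiv:1902.09843 — 7 statements merged into one kernel-verified Lean document; each statement's English description precedes it below -/
import Mathlib

section
/- Let β₂ ∈ (0,1) and let C ∈ ℕ satisfy 5·β₂^(C−2) ≤ (1−β₂)/(4−β₂). Consider the online optimization problem on F = [−2,2] with the linear/piecewise function sequence f_t(x) = −100 for x < 0; 0 for x > 1; −x for 0 ≤ x ≤ 1 and t mod C = 1; 2x for 0 ≤ x ≤ 1 and t mod C = 2; and 0 otherwise. Run Adam with β₁ = 0, starting at x₁ = 0 with m₀ = v₀ = 0: at step t set g_t = ∇f_t(x_t) (i.e. g_t = −1 if 0 ≤ x_t ≤ 1 and t mod C = 1, g_t = 2 if 0 ≤ x_t ≤ 1 and t mod C = 2, and g_t = 0 otherwise), v_t = β₂·v_{t−1} + (1−β₂)·g_t², and x_{t+1} = proj_{[−2,2]}(x_t − (α/√t)·g_t/√v_t) for any initial step size α > 0 (with the convention that the step is 0 when g_t = 0, in which case v_t may vanish). Then the regret R_T = Σ_{t=1}^T f_t(x_t) − min_{x∈[−2,2]} Σ_{t=1}^T f_t(x) satisfies R_T ≥ 100·T for every T that is a multiple of C; in particular R_T/T does not converge to 0 as T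 → ∞, i.e. Adam has non-zero average regret for every initial step size α. -/
open Filter

/-- The `C`-periodic function sequence on `F = [-2,2]` used in the non-convergence
example for Adam: `f_t(x) = -100` for `x < 0`; `0` for `x > 1`; `-x` for
`0 ≤ x ≤ 1` and `t mod C = 1`; `2x` for `0 ≤ x ≤ 1` and `t mod C = 2`; `0` otherwise. -/
noncomputable def adamPaperF (C : ℕ) (t : ℕ) (x : ℝ) : ℝ :=
  if x < 0 then -100
  else if 1 < x then 0
  else if t % C = 1 then -x
  else if t % C = 2 then 2 * x
  else 0

/-!
Split time into blocks `(n, n + C]` with `C ∣ n`. If a block starts with `x_{n+1} ∈ [0, 1]`, Adam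
moves right by `A = α/(√(n+1) √v_{n+1})` (gradient `-1`), then, unless `x_{n+2} > 1`, left by
`B = 2α/(√(n+2) √v_{n+2})` (gradient `2`), and stays put for the rest of the block. Over the quiet
part of the previous block `v` has decayed to at most `(1-β₂)/(4-β₂)` (this is the hypothesis on
`C`), so the gradient `2` at least quadruples `v` and `B ≤ A`. Hence
`x_{n+1} ≤ x_{n+C+1} ≤ x_{n+2}`: the iterate never becomes negative, and the block loss
`-x_{n+1} + 2 x_{n+2}` is at least `x_{n+C+1} - x_{n+1}`, which telescopes. Once `x > 1`, the iterate is frozen with loss `0`. So the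
cumulative loss of Adam is nonnegative at multiples of `C`, while `y = -1` has loss `-100` in every
round.
-/

open Finset Real

lemma sum_Ioc_eq_add_sum_Ioc {M : Type*} [AddCommMonoid M] (f : ℕ → M) {a b : ℕ}
    (hab : a < b) : ∑ t ∈ Ioc a b, f t = f (a + 1) + ∑ t ∈ Ioc (a + 1) b, f t := by
  rw [← sum_Ioc_consecutive f (Nat.le_succ a) hab, Nat.Ioc_succ_singleton, sum_singleton]

lemma not_tendsto_div_of_mul_le_of_dvd {u : ℕ → ℝ} {C : ℕ} (hC : C ≠ 0) {c : ℝ} (hc : 0 < c)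
    (hu : ∀ T, C ∣ T → c * T ≤ u T) : ¬ Tendsto (fun T : ℕ => u T / T) atTop (nhds 0) := by
  intro h
  have hmono : StrictMono fun k : ℕ => C * (k + 1) := fun a b hab => by
    dsimp only; gcongr
  refine (ge_of_tendsto' (h.comp hmono.tendsto_atTop) fun k => ?_).not_gt hc
  have hpos : (0 : ℝ) < (C * (k + 1) : ℕ) := by positivity
  exact (le_div_iff₀ hpos).2 (hu _ (dvd_mul_right C _))

lemma div_sqrt_mul_two_div_sqrt_le {alpha a b w w' : ℝ} (halpha : 0 ≤ alpha) (ha : 0 < a)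
    (hab : a ≤ b) (hw : 0 < w) (hww : 4 * w ≤ w') :
    alpha / √b * 2 / √w' ≤ alpha / √a / √w := by
  have hw' : 2 * √w ≤ √w' := by
    simpa [Real.sqrt_mul, show √(4 : ℝ) = 2 by norm_num] using Real.sqrt_le_sqrt hww
  calc alpha / √b * 2 / √w' = alpha * 2 / (√b * √w') := by ring
    _ ≤ alpha * 2 / (√a * (2 * √w)) := by gcongr
    _ = alpha / √a / √w := by field_simp

lemma add_mod_of_dvd {C n j : ℕ} (hn : C ∣ n) (hj : j < C) : (n + j) % C = j := by
  obtain ⟨k, rfl⟩ := hn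
  rw [Nat.mul_add_mod, Nat.mod_eq_of_lt hj]

lemma add_mod_ne_one_and_ne_two {C n j : ℕ} (hn : C ∣ n) (hj3 : 3 ≤ j) (hjC : j ≤ C) :
    (n + j) % C ≠ 1 ∧ (n + j) % C ≠ 2 := by
  rcases hjC.lt_or_eq with hj | rfl
  · rw [add_mod_of_dvd hn hj]
    omega
  · rw [Nat.add_mod_right, Nat.mod_eq_zero_of_dvd hn]
    omega

lemma three_le_of_five_mul_pow_le {beta2 : ℝ} (hb0 : 0 < beta2) (hb1 : beta2 < 1) {C : ℕ}
    (hC : 5 * beta2 ^ (C - 2) ≤ (1 - beta2) / (4 - beta2)) : 3 ≤ C := by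
  by_contra! hC3
  rw [show C - 2 = 0 by omega, pow_zero, le_div_iff₀ (by linarith)] at hC
  linarith

lemma neg_hundred_le_adamPaperF (C t : ℕ) (y : ℝ) : -100 ≤ adamPaperF C t y := by
  unfold adamPaperF
  split_ifs <;> linarith

lemma isLeast_sum_adamPaperF (C T : ℕ) :
    IsLeast ((fun y => ∑ t ∈ Icc 1 T, adamPaperF C t y) '' Set.Icc (-2 : ℝ) 2) (-100 * T) := by
  have hconst : ∑ _t ∈ Icc 1 T, (-100 : ℝ) = -100 * T := by simp [mul_comm]
  refine ⟨⟨-1, by norm_num, ?_⟩, ?_⟩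
  · rw [← hconst]
    exact sum_congr rfl fun t _ => by simp [adamPaperF]
  · rintro _ ⟨y, -, rfl⟩
    rw [← hconst]
    exact sum_le_sum fun t _ => neg_hundred_le_adamPaperF C t y

lemma adamPaperF_eq_zero_of_one_lt (C t : ℕ) {y : ℝ} (hy : 1 < y) : adamPaperF C t y = 0 := by
  simp [adamPaperF, hy, (zero_lt_one.trans hy).not_gt]

lemma adamPaperF_eq_zero_of_mod_ne {C t : ℕ} {y : ℝ} (hy : 0 ≤ y) (h1 : t % C ≠ 1)
    (h2 : t % C ≠ 2) : adamPaperF C t y = 0 := by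
  simp [adamPaperF, hy.not_gt, h1, h2]

def BlockStartInvariant (beta2 : ℝ) (C : ℕ) (x v : ℕ → ℝ) (n : ℕ) : Prop :=
  (0 ≤ x (n + 1) ∧ x (n + 1) ≤ 1 ∧ v n ≤ (1 - beta2) / (4 - beta2) ∧
      x (n + 1) ≤ ∑ t ∈ Ioc 0 n, adamPaperF C t (x t)) ∨
    (1 < x (n + 1) ∧ 0 ≤ ∑ t ∈ Ioc 0 n, adamPaperF C t (x t))

noncomputable def adamPaperGrad (C t : ℕ) (y : ℝ) : ℝ :=
  if 0 ≤ y ∧ y ≤ 1 then (if t % C = 1 then -1 else if t % C = 2 then 2 else 0) else 0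

lemma adamPaperGrad_sq_le_four (C t : ℕ) (y : ℝ) : adamPaperGrad C t y ^ 2 ≤ 4 := by
  unfold adamPaperGrad
  split_ifs <;> norm_num

lemma adamPaperGrad_eq_zero_of_one_lt (C t : ℕ) {y : ℝ} (hy : 1 < y) :
    adamPaperGrad C t y = 0 := by
  simp [adamPaperGrad, hy.not_ge]

lemma adamPaperGrad_eq_zero_of_mod_ne {C t : ℕ} (y : ℝ) (h1 : t % C ≠ 1) (h2 : t % C ≠ 2) :
    adamPaperGrad C t y = 0 := by
  simp [adamPaperGrad, h1, h2]

lemma g_add_eq_zero_of_dvd {C : ℕ} {x g : ℕ → ℝ}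
    (hg : ∀ t, 1 ≤ t → g t = adamPaperGrad C t (x t)) {n j : ℕ} (hn : C ∣ n) (hj3 : 3 ≤ j)
    (hjC : j ≤ C) : g (n + j) = 0 := by
  obtain ⟨h1, h2⟩ := add_mod_ne_one_and_ne_two hn hj3 hjC
  rw [hg _ (by omega), adamPaperGrad_eq_zero_of_mod_ne _ h1 h2]

structure IsAdamRun (beta2 alpha : ℝ) (x v g : ℕ → ℝ) : Prop where
  x_one : x 1 = 0
  v_zero : v 0 = 0
  v_eq : ∀ t, 1 ≤ t → v t = beta2 * v (t - 1) + (1 - beta2) * g t ^ 2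
  x_succ : ∀ t, 1 ≤ t → x (t + 1) =
    max (-2) (min 2 (x t - (alpha / Real.sqrt t) * g t / Real.sqrt (v t)))

namespace IsAdamRun

variable {beta2 alpha : ℝ} {C : ℕ} {x v g : ℕ → ℝ}

lemma v_succ (h : IsAdamRun beta2 alpha x v g) (t : ℕ) :
    v (t + 1) = beta2 * v t + (1 - beta2) * g (t + 1) ^ 2 := by
  simpa using h.v_eq (t + 1) (by omega)

lemma v_nonneg (h : IsAdamRun beta2 alpha x v g) (hb0 : 0 ≤ beta2) (hb1 : beta2 ≤ 1) (t : ℕ) :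
    0 ≤ v t := by
  induction t with
  | zero => exact h.v_zero.ge
  | succ t ih =>
    rw [h.v_succ]
    have : 0 ≤ 1 - beta2 := by linarith
    positivity

lemma v_le (h : IsAdamRun beta2 alpha x v g) (hb0 : 0 ≤ beta2) (hb1 : beta2 ≤ 1) {M : ℝ}
    (hM : 0 ≤ M) (hg : ∀ t, 1 ≤ t → g t ^ 2 ≤ M) (t : ℕ) : v t ≤ M := by
  induction t with
  | zero => simpa [h.v_zero] using hM
  | succ t ih =>
    rw [h.v_succ]
    nlinarith [hg (t + 1) (by omega)]

lemma x_mem_Icc (h : IsAdamRun beta2 alpha x v g) {t : ℕ} (ht : 1 ≤ t) :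
    x t ∈ Set.Icc (-2) 2 := by
  obtain ⟨s, rfl⟩ := Nat.exists_eq_add_of_le' ht
  cases s with
  | zero => simp [h.x_one]
  | succ s =>
    rw [h.x_succ _ (by omega)]
    exact ⟨le_max_left _ _, max_le (by norm_num) (min_le_left _ _)⟩

lemma x_succ_of_mem (h : IsAdamRun beta2 alpha x v g) {t : ℕ} (ht : 1 ≤ t)
    (hmem : x t - (alpha / Real.sqrt t) * g t / Real.sqrt (v t) ∈ Set.Icc (-2) 2) :
    x (t + 1) = x t - (alpha / Real.sqrt t) * g t / Real.sqrt (v t) := by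
  rw [h.x_succ t ht, min_eq_right hmem.2, max_eq_right hmem.1]

lemma x_succ_of_g_eq_zero (h : IsAdamRun beta2 alpha x v g) {t : ℕ} (ht : 1 ≤ t)
    (hg : g t = 0) : x (t + 1) = x t := by
  simpa [hg] using h.x_succ_of_mem ht (by simpa [hg] using h.x_mem_Icc ht)

lemma x_add_of_g_eq_zero (h : IsAdamRun beta2 alpha x v g) {a j : ℕ} (ha : 1 ≤ a)
    (hg : ∀ i < j, g (a + i) = 0) : x (a + j) = x a := by
  induction j with
  | zero => rfl
  | succ j ih =>
    rw [← add_assoc, h.x_succ_of_g_eq_zero (by omega) (hg j (by omega)),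
      ih fun i hi => hg i (by omega)]

lemma v_add_of_g_eq_zero (h : IsAdamRun beta2 alpha x v g) {a j : ℕ}
    (hg : ∀ i < j, g (a + i + 1) = 0) : v (a + j) = beta2 ^ j * v a := by
  induction j with
  | zero => simp
  | succ j ih =>
    rw [← add_assoc, h.v_succ, hg j (by omega), ih fun i hi => hg i (by omega)]
    ring

lemma x_eq_of_one_lt (h : IsAdamRun beta2 alpha x v g)
    (hg : ∀ t, 1 ≤ t → g t = adamPaperGrad C t (x t)) {a : ℕ} (ha : 1 ≤ a) (hxa : 1 < x a)
    {s : ℕ} (hs : a ≤ s) : x s = x a := by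
  induction s, hs using Nat.le_induction with
  | base => rfl
  | succ s hs ih =>
    rw [h.x_succ_of_g_eq_zero (ha.trans hs) (by rw [hg s (ha.trans hs), ih,
      adamPaperGrad_eq_zero_of_one_lt C s hxa]), ih]

lemma sum_Ioc_adamPaperF_eq_zero_of_one_lt (h : IsAdamRun beta2 alpha x v g)
    (hg : ∀ t, 1 ≤ t → g t = adamPaperGrad C t (x t)) {a n : ℕ} (ha : 1 ≤ a) (hx : 1 < x a)
    (han : a ≤ n + 1) (m : ℕ) : ∑ t ∈ Ioc n m, adamPaperF C t (x t) = 0 := by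
  refine sum_eq_zero fun t ht => ?_
  rw [mem_Ioc] at ht
  rw [h.x_eq_of_one_lt hg ha hx (by omega)]
  exact adamPaperF_eq_zero_of_one_lt C t hx

lemma x_add_three_mem_Icc (h : IsAdamRun beta2 alpha x v g)
    (hg : ∀ t, 1 ≤ t → g t = adamPaperGrad C t (x t)) (hb0 : 0 < beta2) (hb1 : beta2 < 1)
    (halpha : 0 < alpha) (hC3 : 3 ≤ C) {n : ℕ} (hn : C ∣ n) (hx0 : 0 ≤ x (n + 1))
    (hx1 : x (n + 1) ≤ 1) (hv : v n ≤ (1 - beta2) / (4 - beta2)) (hx2 : x (n + 2) ≤ 1) :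
    x (n + 3) ∈ Set.Icc (x (n + 1)) (x (n + 2)) := by
  have hg1 : g (n + 1) = -1 := by
    simp [hg (n + 1) (by omega), adamPaperGrad, hx0, hx1, add_mod_of_dvd hn (by omega : 1 < C)]
  have hv1 : v (n + 1) = beta2 * v n + (1 - beta2) := by rw [h.v_succ, hg1]; ring
  have hv1pos : 0 < v (n + 1) := by rw [hv1]; nlinarith [h.v_nonneg hb0.le hb1.le n]
  set A := alpha / √((n + 1 : ℕ) : ℝ) / √(v (n + 1)) with hA
  have hApos : 0 < A := by positivity
  have hstep1 : x (n + 1) - alpha / √((n + 1 : ℕ) : ℝ) * g (n + 1) / √(v (n + 1)) =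
      x (n + 1) + A := by rw [hg1, hA]; ring
  have hx2A : x (n + 2) = x (n + 1) + A := by
    have hle : x (n + 1) + A ≤ 2 := by
      by_contra! hlt
      rw [h.x_succ (n + 1) (by omega), hstep1, min_eq_left hlt.le] at hx2
      norm_num at hx2
    rw [h.x_succ_of_mem (by omega) (by rw [hstep1]; constructor <;> linarith), hstep1]
  have hg2 : g (n + 2) = 2 := by
    simp [hg (n + 2) (by omega), adamPaperGrad, hx2, add_mod_of_dvd hn (by omega : 2 < C),
      show 0 ≤ x (n + 2) by linarith]
  have hv2 : v (n + 2) = beta2 * v (n + 1) + (1 - beta2) * 4 := by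
    rw [h.v_succ, hg2]; ring
  have hv12 : 4 * v (n + 1) ≤ v (n + 2) := by
    rw [le_div_iff₀ (by linarith)] at hv
    rw [hv2, hv1]
    nlinarith
  have hB : alpha / √((n + 2 : ℕ) : ℝ) * 2 / √(v (n + 2)) ≤ A :=
    div_sqrt_mul_two_div_sqrt_le halpha.le (by positivity) (by push_cast; linarith) hv1pos hv12
  have hstep2 : x (n + 2) - alpha / √((n + 2 : ℕ) : ℝ) * g (n + 2) / √(v (n + 2)) =
      x (n + 2) - alpha / √((n + 2 : ℕ) : ℝ) * 2 / √(v (n + 2)) := by rw [hg2]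
  have hBpos : 0 ≤ alpha / √((n + 2 : ℕ) : ℝ) * 2 / √(v (n + 2)) := by positivity
  rw [h.x_succ_of_mem (t := n + 2) (by omega) (by rw [hstep2]; constructor <;> linarith),
    hstep2]
  constructor <;> linarith

lemma x_add_eq_x_add_three (h : IsAdamRun beta2 alpha x v g)
    (hg : ∀ t, 1 ≤ t → g t = adamPaperGrad C t (x t)) {n j : ℕ} (hn : C ∣ n) (hj3 : 3 ≤ j)
    (hjC : j ≤ C + 1) : x (n + j) = x (n + 3) := by
  obtain ⟨i, rfl⟩ := Nat.exists_eq_add_of_le hj3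
  rw [← add_assoc]
  exact h.x_add_of_g_eq_zero (by omega) fun k hk => by
    rw [add_assoc]; exact g_add_eq_zero_of_dvd hg hn (by omega) (by omega)

lemma v_add_eq_pow_mul (h : IsAdamRun beta2 alpha x v g)
    (hg : ∀ t, 1 ≤ t → g t = adamPaperGrad C t (x t)) {n : ℕ} (hn : C ∣ n) (hC3 : 3 ≤ C) :
    v (n + C) = beta2 ^ (C - 2) * v (n + 2) := by
  rw [← h.v_add_of_g_eq_zero fun k hk => ?_]
  · congr 1; omega
  · rw [show n + 2 + k + 1 = n + (k + 3) by ring]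
    exact g_add_eq_zero_of_dvd hg hn (by omega) (by omega)

lemma blockStartInvariant_add_of_one_lt (h : IsAdamRun beta2 alpha x v g)
    (hg : ∀ t, 1 ≤ t → g t = adamPaperGrad C t (x t)) (hC : 1 ≤ C) {n : ℕ}
    (hx : 1 < x (n + 1)) (hS : 0 ≤ ∑ t ∈ Ioc 0 n, adamPaperF C t (x t)) :
    BlockStartInvariant beta2 C x v (n + C) := by
  right
  rw [h.x_eq_of_one_lt hg (by omega) hx (by omega),
    ← sum_Ioc_consecutive _ (Nat.zero_le n) (Nat.le_add_right n C),
    h.sum_Ioc_adamPaperF_eq_zero_of_one_lt hg (by omega) hx le_rfl, add_zero]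
  exact ⟨hx, hS⟩

lemma blockStartInvariant_add_of_le_one (h : IsAdamRun beta2 alpha x v g)
    (hg : ∀ t, 1 ≤ t → g t = adamPaperGrad C t (x t)) (hb0 : 0 < beta2) (hb1 : beta2 < 1)
    (halpha : 0 < alpha) (hC : 5 * beta2 ^ (C - 2) ≤ (1 - beta2) / (4 - beta2)) {n : ℕ}
    (hn : C ∣ n) (hx0 : 0 ≤ x (n + 1)) (hx1 : x (n + 1) ≤ 1)
    (hv : v n ≤ (1 - beta2) / (4 - beta2))
    (hS : x (n + 1) ≤ ∑ t ∈ Ioc 0 n, adamPaperF C t (x t)) :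
    BlockStartInvariant beta2 C x v (n + C) := by
  have hC3 := three_le_of_five_mul_pow_le hb0 hb1 hC
  have hf1 : adamPaperF C (n + 1) (x (n + 1)) = -x (n + 1) := by
    simp [adamPaperF, hx0.not_gt, hx1.not_gt, add_mod_of_dvd hn (by omega : 1 < C)]
  rw [BlockStartInvariant, ← sum_Ioc_consecutive _ (Nat.zero_le n) (Nat.le_add_right n C),
    sum_Ioc_eq_add_sum_Ioc _ (by omega : n < n + C), hf1]
  by_cases hesc : 1 < x (n + 2)
  · right
    rw [h.x_eq_of_one_lt hg (by omega) hesc (by omega),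
      h.sum_Ioc_adamPaperF_eq_zero_of_one_lt hg (by omega) hesc le_rfl]
    exact ⟨hesc, by linarith⟩
  left
  push Not at hesc
  obtain ⟨h13, h32⟩ := h.x_add_three_mem_Icc hg hb0 hb1 halpha hC3 hn hx0 hx1 hv hesc
  have hf2 : adamPaperF C (n + 2) (x (n + 2)) = 2 * x (n + 2) := by
    simp [adamPaperF, show ¬ x (n + 2) < 0 by linarith, hesc.not_gt,
      add_mod_of_dvd hn (by omega : 2 < C)]
  have hrest : ∑ t ∈ Ioc (n + 2) (n + C), adamPaperF C t (x t) = 0 := by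
    refine sum_eq_zero fun t ht => ?_
    obtain ⟨ht1, ht2⟩ := mem_Ioc.1 ht
    obtain ⟨j, rfl⟩ := Nat.exists_eq_add_of_le (show n ≤ t by omega)
    obtain ⟨h1, h2⟩ := add_mod_ne_one_and_ne_two hn (j := j) (by omega) (by omega)
    rw [h.x_add_eq_x_add_three hg hn (by omega) (by omega)]
    exact adamPaperF_eq_zero_of_mod_ne (by linarith) h1 h2
  have hvC : v (n + C) ≤ (1 - beta2) / (4 - beta2) := by
    have hv2 := h.v_le hb0.le hb1.le zero_le_four
      (fun t ht => hg t ht ▸ adamPaperGrad_sq_le_four C t (x t)) (n + 2)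
    rw [h.v_add_eq_pow_mul hg hn hC3]
    nlinarith [pow_nonneg hb0.le (C - 2), h.v_nonneg hb0.le hb1.le (n + 2)]
  rw [sum_Ioc_eq_add_sum_Ioc _ (by omega : n + 1 < n + C), hf2, hrest,
    add_assoc, h.x_add_eq_x_add_three hg hn (by omega) le_rfl]
  exact ⟨by linarith, by linarith, hvC, by linarith⟩

lemma blockStartInvariant_mul (h : IsAdamRun beta2 alpha x v g)
    (hg : ∀ t, 1 ≤ t → g t = adamPaperGrad C t (x t)) (hb0 : 0 < beta2) (hb1 : beta2 < 1)
    (halpha : 0 < alpha) (hC : 5 * beta2 ^ (C - 2) ≤ (1 - beta2) / (4 - beta2)) (K : ℕ) :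
    BlockStartInvariant beta2 C x v (C * K) := by
  induction K with
  | zero =>
    left
    simp only [mul_zero, zero_add, h.x_one, h.v_zero, Ioc_self, sum_empty]
    exact ⟨le_rfl, zero_le_one, div_nonneg (by linarith) (by linarith), le_rfl⟩
  | succ K ih =>
    rw [Nat.mul_succ]
    rcases ih with ⟨hx0, hx1, hv, hS⟩ | ⟨hx, hS⟩
    · exact h.blockStartInvariant_add_of_le_one hg hb0 hb1 halpha hC (dvd_mul_right C K)
        hx0 hx1 hv hS
    · have hC3 := three_le_of_five_mul_pow_le hb0 hb1 hC
      exact h.blockStartInvariant_add_of_one_lt hg (by omega) hx hS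

lemma sum_adamPaperF_nonneg (h : IsAdamRun beta2 alpha x v g)
    (hg : ∀ t, 1 ≤ t → g t = adamPaperGrad C t (x t)) (hb0 : 0 < beta2) (hb1 : beta2 < 1)
    (halpha : 0 < alpha) (hC : 5 * beta2 ^ (C - 2) ≤ (1 - beta2) / (4 - beta2)) (K : ℕ) :
    0 ≤ ∑ t ∈ Icc 1 (C * K), adamPaperF C t (x t) := by
  rw [show Icc 1 (C * K) = Ioc 0 (C * K) from Icc_add_one_left_eq_Ioc 0 _]
  rcases h.blockStartInvariant_mul hg hb0 hb1 halpha hC K with ⟨hx0, -, -, hS⟩ | ⟨-, hS⟩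
  · exact hx0.trans hS
  · exact hS

end IsAdamRun

/-- Non-convergence of Adam (with `β₁ = 0`) on the `C`-periodic online convex optimization
problem over `F = [-2,2]`: for any initial step size `α > 0`, the regret satisfies
`R_T ≥ 100·T` whenever `C ∣ T`; in particular, `R_T / T` does not converge to `0`,
i.e. Adam has non-zero average regret. -/
theorem adam_nonconvergence_spec_example
    (beta2 : ℝ) (hb20 : 0 < beta2) (hb21 : beta2 < 1)
    (C : ℕ) (hC : 5 * beta2 ^ (C - 2) ≤ (1 - beta2) / (4 - beta2))
    (alpha : ℝ) (halpha : 0 < alpha)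
    (x v g : ℕ → ℝ)
    (hx1 : x 1 = 0) (hv0 : v 0 = 0)
    -- `g t = ∇f_t(x_t)`
    (hg : ∀ t, 1 ≤ t → g t =
      if 0 ≤ x t ∧ x t ≤ 1 then
        (if t % C = 1 then -1 else if t % C = 2 then 2 else 0)
      else 0)
    -- second moment update
    (hv : ∀ t, 1 ≤ t → v t = beta2 * v (t - 1) + (1 - beta2) * g t ^ 2)
    -- projected update with step size `α/√t` (the step vanishes when `g t = 0`)
    (hx : ∀ t, 1 ≤ t → x (t + 1) =
      max (-2) (min 2 (x t - (alpha / Real.sqrt t) * g t / Real.sqrt (v t)))) :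
    (∀ T : ℕ, C ∣ T →
      100 * (T : ℝ) ≤
        (∑ t ∈ Finset.Icc 1 T, adamPaperF C t (x t)) -
          sInf ((fun y => ∑ t ∈ Finset.Icc 1 T, adamPaperF C t y) '' Set.Icc (-2 : ℝ) 2)) ∧
    ¬ Tendsto (fun T : ℕ =>
        ((∑ t ∈ Finset.Icc 1 T, adamPaperF C t (x t)) -
          sInf ((fun y => ∑ t ∈ Finset.Icc 1 T, adamPaperF C t y) '' Set.Icc (-2 : ℝ) 2)) / T)
      atTop (nhds 0) := by
  have hrun : IsAdamRun beta2 alpha x v g := ⟨hx1, hv0, hv, hx⟩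
  have hC0 : C ≠ 0 := by linarith [three_le_of_five_mul_pow_le hb20 hb21 hC]
  refine (and_iff_left_of_imp (not_tendsto_div_of_mul_le_of_dvd hC0 (by norm_num))).2 ?_
  rintro _ ⟨K, rfl⟩
  rw [(isLeast_sum_adamPaperF C _).csInf_eq]
  linarith [hrun.sum_adamPaperF_nonneg hg hb20 hb21 halpha hC K]
end

section
/- Let β₂ ∈ (0,1), let C ∈ ℕ satisfy 5·β₂^(C−2) ≤ (1−β₂)/(4−β₂), and let α > 0. Consider the Adam iteration with β₁ = 0 on F = [−2,2] starting at x₁ = 0, m₀ = v₀ = 0, with gradients g_t given by: g_t = −1 if 0 ≤ x_t ≤ 1 and t mod C = 1; g_t = 2 if 0 ≤ x_t ≤ 1 and t mod C = 2; g_t = 0 otherwise; updates v_t = β₂·v_{t−1} + (1−β₂)·g_t² and x_{t+1} = proj_{[−2,2]}(x_t − (α/√t)·g_t/√v_t) (the step being 0 when g_t = 0). Then x_t ≥ 0 for all t ∈ ℕ. -/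
open Real Set

/-!
Along the run the second moment stays in `[0, 4]`, and between two consecutive `-1` gradients it
decays geometrically for `C - 2` steps, so at a time `s ≡ 1 (mod C)` it is at most
`β₂ · 4β₂^(C-2) + (1 - β₂)`. The hypothesis on `C` makes this small enough that the `+4` step at
time `s + 1` at least quadruples it; since also `√(s+1) ≥ √s`, the step `2α/(√(s+1)√v_{s+1})` taken
down at time `s + 1` is at most the step `α/(√s√v_s)` taken up at time `s`. All other steps are
upward or zero, and the projection onto `[-2, 2]` never makes a nonnegative point negative.
-/

theorem add_le_succ_of_mod_eq_one {C s t : ℕ} (hs : s % C = 1) (ht : t % C = 1 ∨ t % C = 2)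
    (hts : t < s) : t + C ≤ s + 1 := by
  have hs' := Nat.div_add_mod s C
  have ht' := Nat.div_add_mod t C
  have hlt : t / C < s / C := by
    by_contra! h
    have := Nat.mul_le_mul_left C h
    omega
  have := Nat.mul_le_mul_left C hlt
  rw [Nat.mul_succ] at this
  omega

theorem mod_eq_of_succ_mod_eq_succ {C n k : ℕ} (h : (n + 1) % C = k + 1) : n % C = k := by
  rcases Nat.eq_zero_or_pos C with rfl | hC
  · simpa using h
  have hlt := Nat.mod_lt n hC
  rw [← Nat.mod_add_mod] at h
  rcases (Nat.succ_le_of_lt hlt).lt_or_eq with h2 | h2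
  · rw [Nat.mod_eq_of_lt h2] at h
    omega
  · rw [Nat.succ_eq_add_one] at h2
    rw [h2, Nat.mod_self] at h
    omega

theorem le_max_min_of_max_min_lt {α : Type*} [LinearOrder α] {lo hi a : α}
    (h : max lo (min hi a) < hi) : a ≤ max lo (min hi a) := by
  have : min hi a < hi := (le_max_right _ _).trans_lt h
  rw [min_lt_iff, lt_self_iff_false, false_or] at this
  rw [min_eq_right this.le]
  exact le_max_right _ _

theorem div_sqrt_mul_div_sqrt_le {α c a b p q : ℝ} (hα : 0 ≤ α) (hc : 0 < c) (ha : 0 < a)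
    (hab : a ≤ b) (hp : 0 < p) (hpq : c ^ 2 * p ≤ q) : α / √b * c / √q ≤ α / √a / √p := by
  have hq : 0 < √q := sqrt_pos.2 ((mul_pos (pow_pos hc 2) hp).trans_le hpq)
  have hcq : c * √p ≤ √q := by
    calc c * √p = √(c ^ 2 * p) := by rw [sqrt_mul (sq_nonneg c), sqrt_sq hc.le]
      _ ≤ √q := sqrt_le_sqrt hpq
  have hb : α / √b ≤ α / √a := div_le_div_of_nonneg_left hα (sqrt_pos.2 ha) (sqrt_le_sqrt hab)
  calc α / √b * c / √q = α / √b * (c / √q) := by ring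
    _ ≤ α / √a * (1 / √p) := by
      refine mul_le_mul hb ?_ (by positivity) (by positivity)
      rw [div_le_div_iff₀ hq (sqrt_pos.2 hp)]
      linarith
    _ = α / √a / √p := by ring

section ExponentialMovingAverage

variable {β B : ℝ} {a v : ℕ → ℝ}

theorem ema_mem_Icc (hβ0 : 0 ≤ β) (hβ1 : β ≤ 1) (hv0 : v 0 ∈ Icc 0 B)
    (ha : ∀ t, 1 ≤ t → a t ∈ Icc 0 B)
    (hv : ∀ t, 1 ≤ t → v t = β * v (t - 1) + (1 - β) * a t) (t : ℕ) : v t ∈ Icc 0 B := by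
  induction t with
  | zero => exact hv0
  | succ n ih =>
    rw [hv (n + 1) n.succ_pos, Nat.add_sub_cancel]
    simpa only [smul_eq_mul] using
      convex_Icc 0 B ih (ha (n + 1) n.succ_pos) hβ0 (sub_nonneg.2 hβ1) (by ring)

theorem ema_add_eq_pow_mul (hv : ∀ t, 1 ≤ t → v t = β * v (t - 1) + (1 - β) * a t) {m k : ℕ}
    (ha : ∀ i < k, a (m + i + 1) = 0) : v (m + k) = β ^ k * v m := by
  induction k with
  | zero => simp
  | succ k ih =>
    rw [← add_assoc, hv _ (by omega), Nat.add_sub_cancel, ha k k.lt_succ_self,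
      ih fun i hi => ha i (by omega)]
    ring

end ExponentialMovingAverage

/-- `∇f_t(y)`, with the kinks of `f_t` at `0` and `1` given the slope on `[0, 1]`. -/
noncomputable def periodicGrad (C t : ℕ) (y : ℝ) : ℝ :=
  if 0 ≤ y ∧ y ≤ 1 then (if t % C = 1 then -1 else if t % C = 2 then 2 else 0) else 0

section periodicGrad

variable {C t : ℕ} {y : ℝ}

theorem periodicGrad_sq_mem_Icc : periodicGrad C t y ^ 2 ∈ Icc 0 4 := by
  unfold periodicGrad
  split_ifs <;> norm_num

theorem periodicGrad_eq_zero_of_mod (h1 : t % C ≠ 1) (h2 : t % C ≠ 2) :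
    periodicGrad C t y = 0 := by
  simp [periodicGrad, h1, h2]

theorem periodicGrad_eq_zero_of_one_lt (hy : 1 < y) : periodicGrad C t y = 0 := by
  simp [periodicGrad, hy.not_ge]

theorem periodicGrad_eq_neg_one (hy0 : 0 ≤ y) (hy1 : y ≤ 1) (ht : t % C = 1) :
    periodicGrad C t y = -1 := by
  simp [periodicGrad, hy0, hy1, ht]

theorem periodicGrad_nonpos_or_eq_two (C t : ℕ) (y : ℝ) :
    periodicGrad C t y ≤ 0 ∨ periodicGrad C t y = 2 ∧ y ≤ 1 ∧ t % C = 2 := by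
  unfold periodicGrad
  split_ifs <;> simp_all

end periodicGrad

section AdamRun

variable {α β : ℝ} {C : ℕ} {x v g : ℕ → ℝ}

theorem second_moment_mem_Icc (hβ0 : 0 ≤ β) (hβ1 : β ≤ 1) (hv0 : v 0 = 0)
    (hg : ∀ t, 1 ≤ t → g t = periodicGrad C t (x t))
    (hv : ∀ t, 1 ≤ t → v t = β * v (t - 1) + (1 - β) * g t ^ 2) (t : ℕ) : v t ∈ Icc 0 4 :=
  ema_mem_Icc (a := fun t => g t ^ 2) hβ0 hβ1 (by simp [hv0])
    (fun t ht => hg t ht ▸ periodicGrad_sq_mem_Icc) hv t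

theorem second_moment_pred_le_pow (hβ0 : 0 ≤ β) (hβ1 : β ≤ 1) (hv0 : v 0 = 0)
    (hg : ∀ t, 1 ≤ t → g t = periodicGrad C t (x t))
    (hv : ∀ t, 1 ≤ t → v t = β * v (t - 1) + (1 - β) * g t ^ 2) {s : ℕ} (hs : s % C = 1) :
    v (s - 1) ≤ 4 * β ^ (C - 2) := by
  obtain rfl | hs1 := eq_or_ne s 1
  · simp only [Nat.sub_self, hv0]
    positivity
  have hCs : C + 1 ≤ s := by
    have hCs : C ≤ s := not_lt.1 fun h => hs1 (by rwa [Nat.mod_eq_of_lt h] at hs)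
    have hsC : s ≠ C := by rintro rfl; simp at hs
    omega
  have hdecay : v (s - 1 - (C - 2) + (C - 2)) = β ^ (C - 2) * v (s - 1 - (C - 2)) := by
    refine ema_add_eq_pow_mul (a := fun t => g t ^ 2) hv fun i hi => ?_
    have hgap : ¬(s - 1 - (C - 2) + i + 1) % C = 1 ∧ ¬(s - 1 - (C - 2) + i + 1) % C = 2 := by
      rw [← not_or]
      intro ht
      have := add_le_succ_of_mod_eq_one hs ht (by omega)
      omega
    rw [hg _ (by omega), periodicGrad_eq_zero_of_mod hgap.1 hgap.2]
    ring
  rw [Nat.sub_add_cancel (by omega)] at hdecay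
  rw [hdecay, mul_comm]
  exact mul_le_mul_of_nonneg_right (second_moment_mem_Icc hβ0 hβ1 hv0 hg hv _).2 (by positivity)

theorem four_mul_second_moment_le (hβ0 : 0 ≤ β) (hβ1 : β < 1)
    (hC : 5 * β ^ (C - 2) ≤ (1 - β) / (4 - β)) (hv0 : v 0 = 0)
    (hg : ∀ t, 1 ≤ t → g t = periodicGrad C t (x t))
    (hv : ∀ t, 1 ≤ t → v t = β * v (t - 1) + (1 - β) * g t ^ 2) {s : ℕ} (hs1 : 1 ≤ s)
    (hs : s % C = 1) (hgs : g s = -1) (hgs_succ : g (s + 1) = 2) : 4 * v s ≤ v (s + 1) := by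
  have hsmall : (4 - β) * v (s - 1) ≤ 1 - β := by
    have hpow := second_moment_pred_le_pow hβ0 hβ1.le hv0 hg hv hs
    have hvs := (second_moment_mem_Icc hβ0 hβ1.le hv0 hg hv (s - 1)).1
    have hC' := (le_div_iff₀ (by linarith)).1 hC
    nlinarith [pow_nonneg hβ0 (C - 2)]
  rw [hv (s + 1) (by omega), Nat.add_sub_cancel, hv s hs1, hgs, hgs_succ]
  nlinarith [mul_le_mul_of_nonneg_left hsmall hβ0]

theorem iterate_sub_step_nonneg (hα : 0 ≤ α) (hβ0 : 0 ≤ β) (hβ1 : β < 1)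
    (hC : 5 * β ^ (C - 2) ≤ (1 - β) / (4 - β)) (hv0 : v 0 = 0)
    (hg : ∀ t, 1 ≤ t → g t = periodicGrad C t (x t))
    (hv : ∀ t, 1 ≤ t → v t = β * v (t - 1) + (1 - β) * g t ^ 2)
    (hx : ∀ t, 1 ≤ t → x (t + 1) = max (-2) (min 2 (x t - (α / √t) * g t / √(v t))))
    {s : ℕ} (hs1 : 1 ≤ s) (hs : s % C = 1) (hxs : 0 ≤ x s) (hgs_succ : g (s + 1) = 2)
    (hxs_succ : x (s + 1) ≤ 1) : 0 ≤ x (s + 1) - (α / √(s + 1 : ℕ)) * g (s + 1) / √(v (s + 1)) := by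
  have hxs1 : x s ≤ 1 := by
    by_contra! h
    rw [hx s hs1, hg s hs1, periodicGrad_eq_zero_of_one_lt h, mul_zero, zero_div, sub_zero]
      at hxs_succ
    exact hxs_succ.not_gt (lt_max_of_lt_right (lt_min one_lt_two h))
  have hgs : g s = -1 := by rw [hg s hs1, periodicGrad_eq_neg_one hxs hxs1 hs]
  have hvs : 0 < v s := by
    rw [hv s hs1, hgs]
    nlinarith [(second_moment_mem_Icc hβ0 hβ1.le hv0 hg hv (s - 1)).1]
  have hstep : (α / √(s + 1 : ℕ)) * g (s + 1) / √(v (s + 1)) ≤ α / √s / √(v s) := by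
    rw [hgs_succ]
    exact div_sqrt_mul_div_sqrt_le hα two_pos (by exact_mod_cast hs1) (by norm_cast; omega) hvs
      (by linarith [four_mul_second_moment_le hβ0 hβ1 hC hv0 hg hv hs1 hs hgs hgs_succ])
  have hclip : x s + α / √s / √(v s) ≤ x (s + 1) := by
    have := hx s hs1
    rw [hgs, show x s - α / √s * -1 / √(v s) = x s + α / √s / √(v s) by ring] at this
    rw [this]
    exact le_max_min_of_max_min_lt (this ▸ hxs_succ.trans_lt one_lt_two)
  linarith

theorem iterate_succ_nonneg (hα : 0 ≤ α) (hβ0 : 0 ≤ β) (hβ1 : β < 1)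
    (hC : 5 * β ^ (C - 2) ≤ (1 - β) / (4 - β)) (hv0 : v 0 = 0)
    (hg : ∀ t, 1 ≤ t → g t = periodicGrad C t (x t))
    (hv : ∀ t, 1 ≤ t → v t = β * v (t - 1) + (1 - β) * g t ^ 2)
    (hx : ∀ t, 1 ≤ t → x (t + 1) = max (-2) (min 2 (x t - (α / √t) * g t / √(v t))))
    {u : ℕ} (hu : 1 ≤ u) (ih : ∀ t, 1 ≤ t → t ≤ u → 0 ≤ x t) : 0 ≤ x (u + 1) := by
  have hxu := ih u hu le_rfl
  rw [hx u hu]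
  refine le_max_of_le_right (le_min zero_le_two ?_)
  rcases periodicGrad_nonpos_or_eq_two C u (x u) with hneg | ⟨htwo, hxu1, hmod⟩
  · have : α / √u * g u / √(v u) ≤ 0 :=
      div_nonpos_of_nonpos_of_nonneg
        (mul_nonpos_of_nonneg_of_nonpos (by positivity) (hg u hu ▸ hneg)) (sqrt_nonneg _)
    linarith
  · have hu2 : 2 ≤ u := hmod ▸ Nat.mod_le u C
    obtain ⟨s, rfl⟩ : ∃ s, u = s + 1 := ⟨u - 1, by omega⟩
    have hs1 : 1 ≤ s := by omega
    exact iterate_sub_step_nonneg hα hβ0 hβ1 hC hv0 hg hv hx hs1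
      (mod_eq_of_succ_mod_eq_succ hmod) (ih s hs1 (by omega)) (hg _ hu ▸ htwo) hxu1

end AdamRun

/-- The iterates of Adam with `β₁ = 0` on the `C`-periodic gradient sequence over
`F = [-2,2]` starting at `x₁ = 0` stay nonnegative: `x_t ≥ 0` for all `t`. -/
theorem adam_iterates_nonneg
    (beta2 : ℝ) (hb20 : 0 < beta2) (hb21 : beta2 < 1)
    (C : ℕ) (hC : 5 * beta2 ^ (C - 2) ≤ (1 - beta2) / (4 - beta2))
    (alpha : ℝ) (halpha : 0 < alpha)
    (x v g : ℕ → ℝ)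
    (hx1 : x 1 = 0) (hv0 : v 0 = 0)
    -- gradients: `g t = -1` if `0 ≤ x t ≤ 1` and `t % C = 1`; `g t = 2` if
    -- `0 ≤ x t ≤ 1` and `t % C = 2`; `g t = 0` otherwise
    (hg : ∀ t, 1 ≤ t → g t =
      if 0 ≤ x t ∧ x t ≤ 1 then
        (if t % C = 1 then -1 else if t % C = 2 then 2 else 0)
      else 0)
    -- second moment update
    (hv : ∀ t, 1 ≤ t → v t = beta2 * v (t - 1) + (1 - beta2) * g t ^ 2)
    -- projected update with step size `α/√t` (the step vanishes when `g t = 0`)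
    (hx : ∀ t, 1 ≤ t → x (t + 1) =
      max (-2) (min 2 (x t - (alpha / Real.sqrt t) * g t / Real.sqrt (v t)))) :
    ∀ t, 1 ≤ t → 0 ≤ x t := by
  intro t ht
  induction t using Nat.strong_induction_on with
  | _ t ih =>
  rcases ht.eq_or_lt with rfl | ht
  · exact hx1.ge
  obtain ⟨u, rfl⟩ : ∃ u, t = u + 1 := ⟨t - 1, by omega⟩
  exact iterate_succ_nonneg halpha.le hb20.le hb21 hC hv0 hg hv hx (by omega)
    fun s hs hsu => ih s (by omega) hs
end

section
/- Let β₂ ∈ (0,1) and let C ∈ ℕ satisfy 5·β₂^(C−2) ≤ (1−β₂)/(4−β₂). For t ∈ ℕ define V_{Ct} = (1−β₂)·(Σ_{i=1}^{t} β₂^{Ci−1} + 4·Σ_{i=1}^{t} β₂^{Ci−2}) and V_{Ct+1} = β₂·V_{Ct} + (1−β₂). Then V_{Ct+1} − 4·V_{Ct} ≥ 0. -/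
/-!
Writing `V = (1 - β₂)(S₁ + 4 S₂)` with `S_k = ∑_{i=1}^t β₂^{Ci-k}`, the claim is
`(4 - β₂) V ≤ 1 - β₂`. Since `β₂ ≤ 1` we have `S₁ ≤ S₂`, and `S₂ = β₂^{C-2} ∑_{j<t} (β₂^C)^j` is a
geometric sum, so `(1 - β₂) S₂ ≤ (1 - β₂^C) S₂ ≤ β₂^{C-2}`. Hence `V ≤ 5 β₂^{C-2}`, which the
hypothesis bounds by `(1 - β₂)/(4 - β₂)`.
-/

open Finset

lemma one_sub_mul_geom_sum_le {R : Type*} [CommRing R] [LinearOrder R] [IsStrictOrderedRing R]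
    {x : R} (hx : 0 ≤ x) (n : ℕ) : (1 - x) * ∑ i ∈ range n, x ^ i ≤ 1 := by
  rw [mul_neg_geom_sum]
  exact sub_le_self 1 (pow_nonneg hx n)

lemma sum_Icc_pow_mul_sub {R : Type*} [Semiring R] (x : R) {C k : ℕ} (hk : k ≤ C) (t : ℕ) :
    ∑ i ∈ Icc 1 t, x ^ (C * i - k) = x ^ (C - k) * ∑ j ∈ range t, (x ^ C) ^ j := by
  rw [← Ico_add_one_right_eq_Icc, sum_Ico_eq_sum_range, mul_sum, add_tsub_cancel_right]
  refine sum_congr rfl fun j _ => ?_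
  rw [← pow_mul, ← pow_add, mul_add, mul_one]
  congr 1
  omega

lemma one_sub_mul_sum_Icc_pow_mul_sub_le {R : Type*} [CommRing R] [LinearOrder R]
    [IsStrictOrderedRing R] {x : R} (hx0 : 0 ≤ x) (hx1 : x ≤ 1) {C k : ℕ} (hk : k ≤ C)
    (hC : 0 < C) (t : ℕ) :
    (1 - x) * ∑ i ∈ Icc 1 t, x ^ (C * i - k) ≤ x ^ (C - k) := by
  have hxC : x ^ C ≤ x := pow_le_of_le_one hx0 hx1 hC.ne'
  have hgeom := one_sub_mul_geom_sum_le (pow_nonneg hx0 C) t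
  rw [sum_Icc_pow_mul_sub x hk, mul_left_comm]
  calc x ^ (C - k) * ((1 - x) * ∑ j ∈ range t, (x ^ C) ^ j)
      ≤ x ^ (C - k) * ((1 - x ^ C) * ∑ j ∈ range t, (x ^ C) ^ j) := by gcongr
    _ ≤ x ^ (C - k) := mul_le_of_le_one_right (pow_nonneg hx0 _) hgeom

lemma sum_pow_sub_le_sum_pow_sub {R : Type*} [CommSemiring R] [PartialOrder R]
    [IsOrderedRing R] {x : R} (hx0 : 0 ≤ x) (hx1 : x ≤ 1) (s : Finset ℕ) (f : ℕ → ℕ)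
    {k l : ℕ} (hkl : k ≤ l) : ∑ i ∈ s, x ^ (f i - k) ≤ ∑ i ∈ s, x ^ (f i - l) :=
  sum_le_sum fun i _ => pow_le_pow_of_le_one hx0 hx1 (by omega)

/-- The key inequality `V_{Ct+1} - 4·V_{Ct} ≥ 0` in the non-convergence analysis of
Adam on a `C`-periodic gradient sequence, where
`V_{Ct} = (1-β₂)·(Σ_{i=1}^t β₂^{Ci-1} + 4·Σ_{i=1}^t β₂^{Ci-2})` and
`V_{Ct+1} = β₂·V_{Ct} + (1-β₂)`. -/
theorem adam_second_moment_key_inequality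
    (beta2 : ℝ) (hb0 : 0 < beta2) (hb1 : beta2 < 1)
    (C : ℕ) (hC : 5 * beta2 ^ (C - 2) ≤ (1 - beta2) / (4 - beta2))
    (t : ℕ) :
    0 ≤ (beta2 * ((1 - beta2) *
          ((∑ i ∈ Finset.Icc 1 t, beta2 ^ (C * i - 1)) +
            4 * ∑ i ∈ Finset.Icc 1 t, beta2 ^ (C * i - 2))) + (1 - beta2))
        - 4 * ((1 - beta2) *
          ((∑ i ∈ Finset.Icc 1 t, beta2 ^ (C * i - 1)) +
            4 * ∑ i ∈ Finset.Icc 1 t, beta2 ^ (C * i - 2))) := by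
  have h4 : 0 < 4 - beta2 := by linarith
  have hC2 : 2 ≤ C := by
    by_contra! h
    rw [Nat.sub_eq_zero_of_le h.le, pow_zero] at hC
    linarith [(div_lt_one h4).2 (by linarith : 1 - beta2 < 4 - beta2)]
  set S1 := ∑ i ∈ Icc 1 t, beta2 ^ (C * i - 1)
  set S2 := ∑ i ∈ Icc 1 t, beta2 ^ (C * i - 2)
  have hS12 : S1 ≤ S2 := sum_pow_sub_le_sum_pow_sub hb0.le hb1.le _ _ one_le_two
  have hS2 : (1 - beta2) * S2 ≤ beta2 ^ (C - 2) :=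
    one_sub_mul_sum_Icc_pow_mul_sub_le hb0.le hb1.le hC2 (by omega) t
  have hV : (1 - beta2) * (S1 + 4 * S2) ≤ (1 - beta2) / (4 - beta2) :=
    calc (1 - beta2) * (S1 + 4 * S2) ≤ (1 - beta2) * (5 * S2) := by
          gcongr; linarith
      _ = 5 * ((1 - beta2) * S2) := by ring
      _ ≤ 5 * beta2 ^ (C - 2) := by gcongr
      _ ≤ (1 - beta2) / (4 - beta2) := hC
  rw [le_div_iff₀' h4] at hV
  linarith
end

section
/- Let β₁, β₂ ∈ [0,1) with β₁ < √β₂ and set γ = β₁/√β₂ < 1. Let C ∈ ℕ be even and satisfy: (1−β₁)·β₁^(C−1)·C ≤ 1 − β₁^(C−1); β₂^((C−2)/2)·C² ≤ 1; and (3(1−β₁)/(2√(1−β₂)))·(1 + γ(1−γ^(C−1))/(1−γ)) + β₁^(C/2−1)/(1−β₁) < C/3. Consider the online convex optimization problem on F = [−1,1] with f_t(x) = C·x if t mod C = 1 and f_t(x) = −x otherwise. Then for any initial step size α > 0, the Adam algorithm with parameters β₁, β₂ and step size α_t = α/√t has non-zero average regret on this problem, i.e. R_T/T does not converge to 0 as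 T → ∞. -/
open Filter Finset

noncomputable def adamL (beta1 : ℝ) (C : ℕ) (j : ℕ) : ℝ :=
  (1 - beta1 ^ j) - beta1 ^ j * ((1 - beta1) * C)

noncomputable def adamD (beta1 beta2 : ℝ) (C : ℕ) : ℝ :=
  (1 - beta1) / Real.sqrt (1 - beta2) * ∑ j ∈ Finset.range C, (beta1 / Real.sqrt beta2) ^ j

noncomputable def adamS (beta1 beta2 : ℝ) (C : ℕ) : ℝ :=
  ∑ j ∈ Finset.Ico (C/2) C, adamL beta1 C j


noncomputable def adamDC (beta1 beta2 : ℝ) (j : ℕ) : ℝ :=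
  (1 - beta1) * (beta1 / Real.sqrt beta2) ^ j / Real.sqrt (1 - beta2)

noncomputable def adamU (beta1 beta2 alpha : ℝ) (C k : ℕ) (j : ℕ) : ℝ :=
  if j < C/2 then (alpha / Real.sqrt (k*C+1 : ℕ)) * adamDC beta1 beta2 j
  else (alpha / Real.sqrt (k*C+1+C : ℕ)) * (-(adamL beta1 C j) / Real.sqrt (1 + beta2))


section
variable {beta1 beta2 alpha : ℝ} {C : ℕ} {x m v g : ℕ → ℝ}

section
variable {beta1 beta2 : ℝ} {C : ℕ}

lemma adam_b2pos (hb10 : 0 ≤ beta1) (hbb : beta1 < Real.sqrt beta2) : 0 < beta2 :=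
  Real.sqrt_pos.1 (lt_of_le_of_lt hb10 hbb)

lemma adam_gamma_lt_one (hb10 : 0 ≤ beta1) (hbb : beta1 < Real.sqrt beta2) :
    beta1 / Real.sqrt beta2 < 1 :=
  (div_lt_one (Real.sqrt_pos.2 (adam_b2pos hb10 hbb))).2 hbb

lemma adam_C4 (hb11 : beta1 < 1) (hb10 : 0 ≤ beta1) (hb20 : 0 ≤ beta2) (hb21 : beta2 < 1)
    (hbb : beta1 < Real.sqrt beta2) (hCeven : 2 ∣ C)
    (hC2 : beta2 ^ ((C - 2) / 2) * (C : ℝ) ^ 2 ≤ 1)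
    (hC3 : 3 * (1 - beta1) / (2 * Real.sqrt (1 - beta2)) *
        (1 + (beta1 / Real.sqrt beta2) *
          (1 - (beta1 / Real.sqrt beta2) ^ (C - 1)) / (1 - beta1 / Real.sqrt beta2)) +
        beta1 ^ (C / 2 - 1) / (1 - beta1) < (C : ℝ) / 3) : 4 ≤ C := by
  by_contra h
  push_neg at h
  interval_cases C
  · -- C = 0
    simp only [Nat.zero_sub, pow_zero, Nat.cast_zero] at hC3
    have h1 : 0 < 3 * (1 - beta1) / (2 * Real.sqrt (1 - beta2)) := by
      apply div_pos (by linarith)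
      have : 0 < Real.sqrt (1 - beta2) := Real.sqrt_pos.2 (by linarith)
      linarith
    have h2 : 0 < (1 - beta1)⁻¹ := inv_pos.2 (by linarith)
    simp only [sub_self, mul_zero, zero_div, add_zero, mul_one, Nat.zero_div, Nat.zero_sub,
      pow_zero, one_div] at hC3
    nlinarith
  · exact absurd hCeven (by norm_num)
  · norm_num at hC2
  · exact absurd hCeven (by norm_num)

lemma adam_pow_half (hb10 : 0 ≤ beta1) (hbb : beta1 < Real.sqrt beta2) (hb20 : 0 ≤ beta2)
    (hC2 : beta2 ^ ((C - 2) / 2) * (C : ℝ) ^ 2 ≤ 1) (hCeven : 2 ∣ C) (hC4 : 4 ≤ C) :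
    beta1 ^ (C / 2 - 1) * C ≤ 1 := by
  have hsq : beta1 ^ 2 ≤ beta2 := by
    nlinarith [Real.sq_sqrt hb20, Real.sqrt_nonneg beta2]
  have he : (C - 2) / 2 = C / 2 - 1 := by omega
  have h2 : (beta1 ^ 2) ^ (C / 2 - 1) ≤ beta2 ^ (C / 2 - 1) :=
    pow_le_pow_left₀ (by positivity) hsq _
  have h3 : (beta1 ^ (C / 2 - 1)) ^ 2 * (C : ℝ) ^ 2 ≤ 1 := by
    rw [← pow_mul, mul_comm (C / 2 - 1) 2, pow_mul]
    calc (beta1 ^ 2) ^ (C/2-1) * (C : ℝ)^2 ≤ beta2 ^ (C/2-1) * (C : ℝ)^2 := by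
          apply mul_le_mul_of_nonneg_right h2 (by positivity)
      _ ≤ 1 := by rw [← he]; exact hC2
  nlinarith [pow_nonneg hb10 (C / 2 - 1), Nat.cast_nonneg (α := ℝ) C, pow_nonneg hb10 (C/2 -1)]



lemma adam_g_bad (hg : ∀ t, 1 ≤ t → g t = if t % C = 1 then (C : ℝ) else -1)
    (hC : 2 ≤ C) (k : ℕ) : g (k * C + 1) = C := by
  rw [hg _ (by omega), if_pos]
  rw [mul_comm, Nat.mul_add_mod]
  exact Nat.mod_eq_of_lt (by omega)

lemma adam_g_good (hg : ∀ t, 1 ≤ t → g t = if t % C = 1 then (C : ℝ) else -1)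
    (hC : 2 ≤ C) (k j : ℕ) (hj1 : 1 ≤ j) (hj2 : j < C) : g (k * C + 1 + j) = -1 := by
  rw [hg _ (by omega), if_neg]
  have : k * C + 1 + j = C * k + (1 + j) := by ring
  rw [this, Nat.mul_add_mod]
  rcases Nat.lt_or_ge (1 + j) C with h | h
  · rw [Nat.mod_eq_of_lt h]; omega
  · have : 1 + j = C := by omega
    rw [this, Nat.mod_self]; omega

lemma adam_g_cases (hg : ∀ t, 1 ≤ t → g t = if t % C = 1 then (C : ℝ) else -1)
    (t : ℕ) (ht : 1 ≤ t) : g t = C ∨ g t = -1 := by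
  rw [hg t ht]; split <;> simp

lemma adam_m_bound (hb10 : 0 ≤ beta1) (hb11 : beta1 < 1)
    (hg : ∀ t, 1 ≤ t → g t = if t % C = 1 then (C : ℝ) else -1)
    (hm0 : m 0 = 0) (hm : ∀ t, 1 ≤ t → m t = beta1 * m (t - 1) + (1 - beta1) * g t) :
    ∀ t, -1 ≤ m t ∧ m t ≤ C := by
  intro t
  induction t with
  | zero => rw [hm0]; constructor <;> [linarith; exact Nat.cast_nonneg C]
  | succ n ih =>
    rw [hm (n+1) (by omega)]
    simp only [Nat.add_sub_cancel]
    have hgc := adam_g_cases hg (n+1) (by omega)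
    have hC0 : (0:ℝ) ≤ C := Nat.cast_nonneg C
    rcases hgc with h | h <;> rw [h] <;> constructor <;> nlinarith [ih.1, ih.2]

lemma adam_v_bound (hb20 : 0 ≤ beta2) (hb21 : beta2 < 1)
    (hg : ∀ t, 1 ≤ t → g t = if t % C = 1 then (C : ℝ) else -1) (hC : 1 ≤ C)
    (hv0 : v 0 = 0) (hv : ∀ t, 1 ≤ t → v t = beta2 * v (t - 1) + (1 - beta2) * g t ^ 2) :
    ∀ t, 0 ≤ v t ∧ v t ≤ (C:ℝ) ^ 2 := by
  intro t
  induction t with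
  | zero => rw [hv0]; constructor <;> positivity
  | succ n ih =>
    rw [hv (n+1) (by omega)]
    simp only [Nat.add_sub_cancel]
    have hgc := adam_g_cases hg (n+1) (by omega)
    have hC1 : (1:ℝ) ≤ C := by exact_mod_cast hC
    have hC2 : (1:ℝ) ≤ (C:ℝ)^2 := by nlinarith
    rcases hgc with h | h <;> rw [h] <;> constructor <;> nlinarith [ih.1, ih.2]

lemma adam_v_lb (hb20 : 0 ≤ beta2) (hb21 : beta2 < 1)
    (hg : ∀ t, 1 ≤ t → g t = if t % C = 1 then (C : ℝ) else -1) (hC : 1 ≤ C)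
    (hv0 : v 0 = 0) (hv : ∀ t, 1 ≤ t → v t = beta2 * v (t - 1) + (1 - beta2) * g t ^ 2) :
    ∀ t, 1 ≤ t → 1 - beta2 ≤ v t := by
  intro t ht
  rw [hv t ht]
  have h0 : 0 ≤ v (t-1) := (adam_v_bound hb20 hb21 hg hC hv0 hv (t-1)).1
  have hgc := adam_g_cases hg t ht
  have hC1 : (1:ℝ) ≤ C := by exact_mod_cast hC
  have hC2 : (1:ℝ) ≤ (C:ℝ)^2 := by nlinarith
  rcases hgc with h | h <;> rw [h] <;> nlinarith

lemma adam_x_bound (hx1 : x 1 ∈ Set.Icc (-1 : ℝ) 1)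
    (hx : ∀ t, 1 ≤ t → x (t + 1) =
      max (-1) (min 1 (x t - (alpha / Real.sqrt t) * m t / Real.sqrt (v t)))) :
    ∀ t, 1 ≤ t → -1 ≤ x t ∧ x t ≤ 1 := by
  intro t ht
  rcases Nat.exists_eq_add_of_le ht with ⟨n, rfl⟩
  cases n with
  | zero => exact ⟨hx1.1, hx1.2⟩
  | succ n =>
    have : 1 + (n+1) = (1+n) + 1 := by omega
    rw [this, hx (1+n) (by omega)]
    refine ⟨le_max_left _ _, max_le (by norm_num) (min_le_left _ _)⟩

lemma adam_m_block (hb10 : 0 ≤ beta1) (hb11 : beta1 < 1) (hC : 2 ≤ C)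
    (hC1 : (1 - beta1) * beta1 ^ (C - 1) * C ≤ 1 - beta1 ^ (C - 1))
    (hg : ∀ t, 1 ≤ t → g t = if t % C = 1 then (C : ℝ) else -1)
    (hm0 : m 0 = 0) (hm : ∀ t, 1 ≤ t → m t = beta1 * m (t - 1) + (1 - beta1) * g t) :
    ∀ k, m (k * C) ≤ 0 ∧
      ∀ j, j < C → m (k * C + 1 + j) ≤ beta1 ^ j * ((1 - beta1) * C) - (1 - beta1 ^ j) := by
  have key : ∀ k, m (k * C) ≤ 0 →
      ∀ j, j < C → m (k * C + 1 + j) ≤ beta1 ^ j * ((1 - beta1) * C) - (1 - beta1 ^ j) := by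
    intro k hk j
    induction j with
    | zero =>
      intro _
      have ht : m (k*C+1) = beta1 * m (k*C) + (1-beta1) * g (k*C+1) := by
        have := hm (k*C+1) (by omega)
        simpa using this
      rw [show k*C+1+0 = k*C+1 from rfl, ht, adam_g_bad hg hC k]
      simp only [pow_zero]
      nlinarith
    | succ j ih =>
      intro hjC
      have ihj := ih (by omega)
      have ht : m (k*C+1+(j+1)) = beta1 * m (k*C+1+j) + (1-beta1) * g (k*C+1+(j+1)) := by
        have := hm (k*C+1+(j+1)) (by omega)
        have he : k*C+1+(j+1) - 1 = k*C+1+j := by omega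
        rwa [he] at this
      rw [ht, adam_g_good hg hC k (j+1) (by omega) hjC]
      have hb1p : (0:ℝ) ≤ beta1 ^ j := pow_nonneg hb10 j
      rw [pow_succ]
      nlinarith
  intro k
  induction k with
  | zero =>
    have h0 : m 0 ≤ 0 := le_of_eq hm0
    exact ⟨by simpa using h0, key 0 (by simpa using h0)⟩
  | succ k ih =>
    have hk1 : m ((k+1) * C) ≤ 0 := by
      have he : (k+1) * C = k * C + 1 + (C - 1) := by
        have h' : (k+1) * C = k * C + C := by ring
        omega
      rw [he]
      calc m (k*C+1+(C-1)) ≤ beta1 ^ (C-1) * ((1-beta1)*C) - (1 - beta1 ^ (C-1)) :=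
            key k ih.1 (C-1) (by omega)
        _ ≤ 0 := by nlinarith [hC1]
    exact ⟨hk1, key (k+1) hk1⟩

lemma adam_v_block (hb20 : 0 ≤ beta2) (hb21 : beta2 < 1) (hC : 2 ≤ C)
    (hg : ∀ t, 1 ≤ t → g t = if t % C = 1 then (C : ℝ) else -1)
    (hv0 : v 0 = 0) (hv : ∀ t, 1 ≤ t → v t = beta2 * v (t - 1) + (1 - beta2) * g t ^ 2) :
    ∀ k j, j < C → beta2 ^ j * ((1 - beta2) * (C:ℝ)^2) ≤ v (k * C + 1 + j) ∧
      v (k * C + 1 + j) ≤ beta2 ^ j * (C:ℝ)^2 + 1 := by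
  intro k j
  induction j with
  | zero =>
    intro _
    have ht : v (k*C+1) = beta2 * v (k*C) + (1-beta2) * g (k*C+1) ^ 2 := by
      have := hv (k*C+1) (by omega)
      simpa using this
    have hvb := adam_v_bound hb20 hb21 hg (by omega) hv0 hv (k*C)
    rw [show k*C+1+0 = k*C+1 from rfl, ht, adam_g_bad hg hC k]
    simp only [pow_zero]
    constructor <;> nlinarith [hvb.1, hvb.2]
  | succ j ih =>
    intro hjC
    have ihj := ih (by omega)
    have ht : v (k*C+1+(j+1)) = beta2 * v (k*C+1+j) + (1-beta2) * g (k*C+1+(j+1)) ^ 2 := by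
      have := hv (k*C+1+(j+1)) (by omega)
      have he : k*C+1+(j+1) - 1 = k*C+1+j := by omega
      rwa [he] at this
    rw [ht, adam_g_good hg hC k (j+1) (by omega) hjC]
    rw [pow_succ]
    constructor <;> nlinarith [ihj.1, ihj.2]


lemma adam_L_ge_half (hb10 : 0 ≤ beta1) (hb11 : beta1 < 1) (hC4 : 4 ≤ C)
    (hpow : beta1 ^ (C / 2 - 1) * C ≤ 1) :
    ∀ j, C/2 ≤ j → 1/2 ≤ adamL beta1 C j := by
  intro j hj
  unfold adamL
  have h1 : beta1 ^ j ≤ beta1 ^ (C/2) := pow_le_pow_of_le_one hb10 hb11.le hj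
  have h2 : beta1 ^ (C/2) = beta1 ^ (C/2-1) * beta1 := by
    rw [← pow_succ]; congr 1; omega
  have h3 : beta1 ^ (C/2-1) ≤ 1 := pow_le_one₀ hb10 hb11.le
  have h4 : (4:ℝ) ≤ C := by exact_mod_cast hC4
  have h5 : (0:ℝ) ≤ beta1 ^ (C/2-1) := pow_nonneg hb10 _
  have h6 : beta1 ^ (C/2-1) * C ≤ 1 := hpow
  have hb : beta1 ^ (C/2-1) ≤ 1/4 := by nlinarith
  have ha : beta1 * (1-beta1) ≤ 1/4 := by nlinarith [sq_nonneg (beta1 - 1/2)]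
  have hfac : (0:ℝ) ≤ 1 + (1-beta1)*C := by nlinarith
  have h7 : beta1 ^ j * (1 + (1-beta1)*C) ≤ beta1 ^ (C/2) * (1 + (1-beta1)*C) :=
    mul_le_mul_of_nonneg_right h1 hfac
  have h8 : beta1 ^ (C/2) * (1 + (1-beta1)*C) = beta1 ^ (C/2-1) * beta1 + (beta1*(1-beta1)) * (beta1 ^ (C/2-1) * C) := by
    rw [h2]; ring
  have h9 : beta1 ^ (C/2-1) * beta1 ≤ 1/4 := by nlinarith
  have h10 : (beta1*(1-beta1)) * (beta1 ^ (C/2-1) * C) ≤ 1/4 * 1 := by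
    apply mul_le_mul ha h6 (mul_nonneg h5 (Nat.cast_nonneg C)) (by norm_num)
  nlinarith [pow_nonneg hb10 j]

lemma adam_sqrt_blk (hb20 : 0 ≤ beta2) (hb21 : beta2 < 1) (hC : 1 ≤ C) (j : ℕ) :
    Real.sqrt (beta2 ^ j * ((1 - beta2) * (C:ℝ)^2)) =
      Real.sqrt beta2 ^ j * (Real.sqrt (1 - beta2) * C) := by
  have h1 : Real.sqrt (beta2 ^ j) = Real.sqrt beta2 ^ j := by
    rw [show beta2 ^ j = (Real.sqrt beta2 ^ j) ^ 2 by
      rw [← pow_mul, mul_comm j 2, pow_mul, Real.sq_sqrt hb20]]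
    exact Real.sqrt_sq (pow_nonneg (Real.sqrt_nonneg _) j)
  have h2 : Real.sqrt ((C:ℝ)^2) = (C:ℝ) := Real.sqrt_sq (Nat.cast_nonneg C)
  rw [Real.sqrt_mul (pow_nonneg hb20 j), Real.sqrt_mul (by linarith), h1, h2]

lemma adam_ratio_down {m v g : ℕ → ℝ}
    (hb10 : 0 ≤ beta1) (hb11 : beta1 < 1) (hb20 : 0 ≤ beta2) (hb21 : beta2 < 1)
    (hbb : beta1 < Real.sqrt beta2) (hC : 2 ≤ C)
    (hC1 : (1 - beta1) * beta1 ^ (C - 1) * C ≤ 1 - beta1 ^ (C - 1))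
    (hg : ∀ t, 1 ≤ t → g t = if t % C = 1 then (C : ℝ) else -1)
    (hm0 : m 0 = 0) (hm : ∀ t, 1 ≤ t → m t = beta1 * m (t - 1) + (1 - beta1) * g t)
    (hv0 : v 0 = 0) (hv : ∀ t, 1 ≤ t → v t = beta2 * v (t - 1) + (1 - beta2) * g t ^ 2)
    (k j : ℕ) (hj : j < C) :
    m (k*C+1+j) / Real.sqrt (v (k*C+1+j)) ≤
      (1 - beta1) * (beta1 / Real.sqrt beta2) ^ j / Real.sqrt (1 - beta2) := by
  have hb2pos : 0 < beta2 := adam_b2pos hb10 hbb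
  have hRHS : 0 ≤ (1 - beta1) * (beta1 / Real.sqrt beta2) ^ j / Real.sqrt (1 - beta2) := by
    apply div_nonneg _ (Real.sqrt_nonneg _)
    apply mul_nonneg (by linarith)
    exact pow_nonneg (div_nonneg hb10 (Real.sqrt_nonneg _)) j
  rcases le_or_gt (m (k*C+1+j)) 0 with hmle | hmpos
  · exact le_trans (div_nonpos_of_nonpos_of_nonneg hmle (Real.sqrt_nonneg _)) hRHS
  · have hmub : m (k*C+1+j) ≤ beta1 ^ j * ((1-beta1) * C) := by
      have := (adam_m_block hb10 hb11 hC hC1 hg hm0 hm k).2 j hj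
      have h2 : (0:ℝ) ≤ 1 - beta1 ^ j := by
        have := pow_le_one₀ hb10 hb11.le (n := j); linarith
      linarith
    have hvlb : beta2 ^ j * ((1 - beta2) * (C:ℝ)^2) ≤ v (k*C+1+j) :=
      (adam_v_block hb20 hb21 hC hg hv0 hv k j hj).1
    have hvlbpos : 0 < beta2 ^ j * ((1 - beta2) * (C:ℝ)^2) := by
      have hc : (0:ℝ) < C := by exact_mod_cast (by omega : 0 < C)
      exact mul_pos (pow_pos hb2pos j) (mul_pos (by linarith) (by positivity))
    have hslb : 0 < Real.sqrt (beta2 ^ j * ((1 - beta2) * (C:ℝ)^2)) := Real.sqrt_pos.2 hvlbpos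
    calc m (k*C+1+j) / Real.sqrt (v (k*C+1+j))
        ≤ m (k*C+1+j) / Real.sqrt (beta2 ^ j * ((1 - beta2) * (C:ℝ)^2)) := by
          exact div_le_div_of_nonneg_left hmpos.le hslb (Real.sqrt_le_sqrt hvlb)
      _ ≤ (beta1 ^ j * ((1-beta1) * C)) / Real.sqrt (beta2 ^ j * ((1 - beta2) * (C:ℝ)^2)) := by
          gcongr
      _ = (1 - beta1) * (beta1 / Real.sqrt beta2) ^ j / Real.sqrt (1 - beta2) := by
          rw [adam_sqrt_blk hb20 hb21 (by omega) j, div_pow]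
          have h1 : Real.sqrt beta2 ^ j ≠ 0 := pow_ne_zero _ (Real.sqrt_pos.2 hb2pos).ne'
          have h2 : Real.sqrt (1 - beta2) ≠ 0 := (Real.sqrt_pos.2 (by linarith)).ne'
          have h3 : (C:ℝ) ≠ 0 := by positivity
          field_simp

lemma adam_ratio_up {m v g : ℕ → ℝ}
    (hb10 : 0 ≤ beta1) (hb11 : beta1 < 1) (hb20 : 0 ≤ beta2) (hb21 : beta2 < 1)
    (hbb : beta1 < Real.sqrt beta2) (hC4 : 4 ≤ C) (hCeven : 2 ∣ C)
    (hC1 : (1 - beta1) * beta1 ^ (C - 1) * C ≤ 1 - beta1 ^ (C - 1))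
    (hC2 : beta2 ^ ((C - 2) / 2) * (C : ℝ) ^ 2 ≤ 1)
    (hpow : beta1 ^ (C / 2 - 1) * C ≤ 1)
    (hg : ∀ t, 1 ≤ t → g t = if t % C = 1 then (C : ℝ) else -1)
    (hm0 : m 0 = 0) (hm : ∀ t, 1 ≤ t → m t = beta1 * m (t - 1) + (1 - beta1) * g t)
    (hv0 : v 0 = 0) (hv : ∀ t, 1 ≤ t → v t = beta2 * v (t - 1) + (1 - beta2) * g t ^ 2)
    (k j : ℕ) (hj1 : C/2 ≤ j) (hj : j < C) :
    m (k*C+1+j) / Real.sqrt (v (k*C+1+j)) ≤ -(adamL beta1 C j) / Real.sqrt (1 + beta2) := by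
  have hC : 2 ≤ C := by omega
  have hmub : m (k*C+1+j) ≤ -(adamL beta1 C j) := by
    have := (adam_m_block hb10 hb11 hC hC1 hg hm0 hm k).2 j hj
    unfold adamL; linarith
  have hL : 1/2 ≤ adamL beta1 C j := adam_L_ge_half hb10 hb11 hC4 hpow j hj1
  have hvub : v (k*C+1+j) ≤ 1 + beta2 := by
    have h1 : v (k*C+1+j) ≤ beta2 ^ j * (C:ℝ)^2 + 1 :=
      (adam_v_block hb20 hb21 hC hg hv0 hv k j hj).2
    have h2 : beta2 ^ j ≤ beta2 ^ (C/2) := pow_le_pow_of_le_one hb20 hb21.le hj1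
    have h3 : beta2 ^ (C/2) = beta2 * beta2 ^ ((C-2)/2) := by
      rw [← pow_succ']; congr 1; omega
    have h4 : beta2 ^ j * (C:ℝ)^2 ≤ beta2 := by
      calc beta2 ^ j * (C:ℝ)^2 ≤ beta2 ^ (C/2) * (C:ℝ)^2 := by
            apply mul_le_mul_of_nonneg_right h2 (by positivity)
        _ = beta2 * (beta2 ^ ((C-2)/2) * (C:ℝ)^2) := by rw [h3]; ring
        _ ≤ beta2 * 1 := mul_le_mul_of_nonneg_left hC2 hb20
        _ = beta2 := mul_one beta2
    linarith
  have hvpos : 0 < v (k*C+1+j) := by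
    have hb2pos : 0 < beta2 := adam_b2pos hb10 hbb
    have hvl := (adam_v_block hb20 hb21 hC hg hv0 hv k j hj).1
    have hC0 : (0:ℝ) < C := by exact_mod_cast (by omega : 0 < C)
    exact lt_of_lt_of_le (mul_pos (pow_pos hb2pos j) (mul_pos (by linarith) (by positivity))) hvl
  have hs1 : 0 < Real.sqrt (v (k*C+1+j)) := Real.sqrt_pos.2 hvpos
  have hs2 : 0 < Real.sqrt (1 + beta2) := Real.sqrt_pos.2 (by linarith)
  have hs3 : Real.sqrt (v (k*C+1+j)) ≤ Real.sqrt (1 + beta2) := Real.sqrt_le_sqrt hvub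
  rw [div_le_div_iff₀ hs1 hs2]
  have hmneg : m (k*C+1+j) ≤ -(1/2) := by linarith
  nlinarith

lemma adam_D_nonneg (hb10 : 0 ≤ beta1) (hb11 : beta1 < 1) (hbb : beta1 < Real.sqrt beta2) :
    0 ≤ adamD beta1 beta2 C := by
  unfold adamD
  apply mul_nonneg (div_nonneg (by linarith) (Real.sqrt_nonneg _))
  apply Finset.sum_nonneg
  intro j _
  exact pow_nonneg (div_nonneg hb10 (Real.sqrt_nonneg _)) j

lemma adam_geom_aux (γ : ℝ) (h : γ ≠ 1) (C : ℕ) (hC : 1 ≤ C) :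
    ∑ j ∈ Finset.range C, γ ^ j = 1 + γ * (1 - γ ^ (C-1)) / (1 - γ) := by
  obtain ⟨d, rfl⟩ : ∃ d, C = d + 1 := ⟨C - 1, by omega⟩
  have h1 : (1:ℝ) - γ ≠ 0 := sub_ne_zero_of_ne (Ne.symm h)
  have h2 : (1:ℝ) - γ^(d+1) = (1-γ) + γ*(1-γ^d) := by ring
  rw [geom_sum_eq h]
  simp only [Nat.add_sub_cancel]
  rw [show γ^(d+1) - 1 = -(1 - γ^(d+1)) by ring, show γ - 1 = -(1-γ) by ring,
    neg_div_neg_eq, h2, add_div, div_self h1]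

lemma adam_D_lt (hb10 : 0 ≤ beta1) (hb11 : beta1 < 1) (hb20 : 0 ≤ beta2) (hb21 : beta2 < 1)
    (hbb : beta1 < Real.sqrt beta2) (hC4 : 4 ≤ C)
    (hC3 : 3 * (1 - beta1) / (2 * Real.sqrt (1 - beta2)) *
        (1 + (beta1 / Real.sqrt beta2) *
          (1 - (beta1 / Real.sqrt beta2) ^ (C - 1)) / (1 - beta1 / Real.sqrt beta2)) +
        beta1 ^ (C / 2 - 1) / (1 - beta1) < (C : ℝ) / 3) :
    3/2 * adamD beta1 beta2 C + beta1 ^ (C / 2 - 1) / (1 - beta1) < (C : ℝ) / 3 := by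
  have hγ1 : beta1 / Real.sqrt beta2 < 1 := adam_gamma_lt_one hb10 hbb
  have hsum := adam_geom_aux (beta1 / Real.sqrt beta2) hγ1.ne C (by omega)
  have hs : Real.sqrt (1 - beta2) ≠ 0 := (Real.sqrt_pos.2 (by linarith)).ne'
  unfold adamD
  rw [hsum]
  generalize (1 + (beta1 / Real.sqrt beta2) *
      (1 - (beta1 / Real.sqrt beta2) ^ (C-1)) / (1 - beta1 / Real.sqrt beta2)) = X at hC3 ⊢
  have hco : 3/2 * ((1 - beta1) / Real.sqrt (1 - beta2) * X) =
      3 * (1 - beta1) / (2 * Real.sqrt (1 - beta2)) * X := by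
    field_simp
  rw [hco]
  exact hC3


set_option maxHeartbeats 1000000 in
lemma adam_key (hb10 : 0 ≤ beta1) (hb11 : beta1 < 1) (hb20 : 0 ≤ beta2) (hb21 : beta2 < 1)
    (hbb : beta1 < Real.sqrt beta2) (hC4 : 4 ≤ C) (hCeven : 2 ∣ C)
    (hC2 : beta2 ^ ((C - 2) / 2) * (C : ℝ) ^ 2 ≤ 1)
    (hpow : beta1 ^ (C / 2 - 1) * C ≤ 1)
    (hDlt : 3/2 * adamD beta1 beta2 C + beta1 ^ (C / 2 - 1) / (1 - beta1) < (C : ℝ) / 3)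
    (hD0 : 0 ≤ adamD beta1 beta2 C) :
    Real.sqrt (1 + beta2) * adamD beta1 beta2 C < adamS beta1 beta2 C := by
  set Y := beta1 ^ (C / 2 - 1) / (1 - beta1) with hYdef
  have hY0 : 0 ≤ Y := div_nonneg (pow_nonneg hb10 _) (by linarith)
  set D := adamD beta1 beta2 C with hDdef
  have hLrw : ∀ j, adamL beta1 C j = 1 - (1 + (1-beta1)*C) * beta1 ^ j := by
    intro j; unfold adamL; ring
  rcases eq_or_lt_of_le hC4 with hC4' | hC6
  · -- C = 4
    have hC4'' : C = 4 := hC4'.symm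
    subst hC4''
    have hb14 : beta1 ≤ 1/4 := by
      norm_num at hpow; linarith
    have hb216 : beta2 ≤ 1/16 := by
      norm_num at hC2; linarith
    have hS : (103:ℝ)/64 ≤ adamS beta1 beta2 4 := by
      unfold adamS
      norm_num
      rw [Finset.sum_Ico_succ_top (by norm_num : 2 ≤ 3),
        Finset.sum_Ico_succ_top (le_refl 2), Finset.Ico_self, Finset.sum_empty, zero_add]
      rw [hLrw 2, hLrw 3]
      nlinarith [pow_nonneg hb10 2, pow_nonneg hb10 3, sq_nonneg beta1]
    have hDub : D ≤ 8/9 := by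
      have : (4:ℝ)/3 - Y ≤ 4/3 := by linarith
      norm_num at hDlt
      linarith
    have hsq : Real.sqrt (1 + beta2) ≤ 21/20 := by
      rw [show (21:ℝ)/20 = Real.sqrt ((21/20)^2) from (Real.sqrt_sq (by norm_num)).symm]
      apply Real.sqrt_le_sqrt; norm_num; linarith
    calc Real.sqrt (1 + beta2) * D ≤ (21/20) * (8/9) := by
          apply mul_le_mul hsq hDub hD0 (by norm_num)
      _ < 103/64 := by norm_num
      _ ≤ adamS beta1 beta2 4 := hS
  · -- C ≥ 6, even so C ≥ 6
    have hC6' : 6 ≤ C := by omega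
    have hCr : (6:ℝ) ≤ C := by exact_mod_cast hC6'
    -- lower bound on adamS
    have hcard : ((C - C/2 : ℕ) : ℝ) = (C:ℝ)/2 := by
      have : C - C/2 = C/2 := by omega
      rw [this]
      have : (C : ℝ) = ((2 * (C/2) : ℕ) : ℝ) := by norm_cast; omega
      rw [this]; push_cast; ring
    have hgeo : ∑ j ∈ Finset.Ico (C/2) C, beta1 ^ j ≤ beta1 ^ (C/2) / (1 - beta1) :=
      geom_sum_Ico_le_of_lt_one hb10 hb11
    have hfac0 : (0:ℝ) ≤ 1 + (1-beta1)*C := by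
      have : (0:ℝ) ≤ C := Nat.cast_nonneg C
      nlinarith
    have hSrw : adamS beta1 beta2 C =
        (C:ℝ)/2 - (1 + (1-beta1)*C) * ∑ j ∈ Finset.Ico (C/2) C, beta1 ^ j := by
      unfold adamS
      rw [Finset.sum_congr rfl (fun j _ => hLrw j), Finset.sum_sub_distrib, ← Finset.mul_sum]
      rw [Finset.sum_const, Nat.card_Ico, nsmul_eq_mul, mul_one]
      rw [show ((C - C/2 : ℕ) : ℝ) = (C:ℝ)/2 from hcard]
    have hsplit : (1 + (1-beta1)*C) * (beta1 ^ (C/2) / (1 - beta1)) =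
        beta1 * (beta1 ^ (C/2-1) / (1-beta1)) + beta1 * (beta1 ^ (C/2-1) * C) := by
      have hpows : beta1 ^ (C/2) = beta1 ^ (C/2-1) * beta1 := by
        rw [← pow_succ]; congr 1; omega
      have h1b : (1:ℝ) - beta1 ≠ 0 := by linarith
      rw [hpows]; field_simp
    have hS_lb : (C:ℝ)/2 - Y - 1 ≤ adamS beta1 beta2 C := by
      rw [hSrw]
      have h1 : (1 + (1-beta1)*C) * ∑ j ∈ Finset.Ico (C/2) C, beta1 ^ j ≤
          (1 + (1-beta1)*C) * (beta1 ^ (C/2) / (1 - beta1)) :=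
        mul_le_mul_of_nonneg_left hgeo hfac0
      rw [hsplit] at h1
      have h2 : beta1 * (beta1 ^ (C/2-1) / (1-beta1)) ≤ Y := by
        rw [hYdef]
        nlinarith [hY0]
      have h3 : beta1 * (beta1 ^ (C/2-1) * C) ≤ 1 := by
        nlinarith [mul_nonneg (pow_nonneg hb10 (C/2-1)) (Nat.cast_nonneg (α := ℝ) C)]
      linarith
    -- sqrt 2 bound
    have hq2 : Real.sqrt (1+beta2) ≤ Real.sqrt 2 := Real.sqrt_le_sqrt (by linarith)
    have hq32 : Real.sqrt 2 < 3/2 := by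
      rw [show (3:ℝ)/2 = Real.sqrt ((3/2)^2) from (Real.sqrt_sq (by norm_num)).symm]
      apply Real.sqrt_lt_sqrt <;> norm_num
    have hq0 : 0 ≤ Real.sqrt 2 := Real.sqrt_nonneg 2
    have hP : 0 < (C:ℝ)/3 - Y := by linarith
    have hDub : D ≤ 2/3 * ((C:ℝ)/3 - Y) := by linarith
    calc Real.sqrt (1 + beta2) * D ≤ Real.sqrt 2 * D :=
          mul_le_mul_of_nonneg_right hq2 hD0
      _ ≤ Real.sqrt 2 * (2/3 * ((C:ℝ)/3 - Y)) := mul_le_mul_of_nonneg_left hDub hq0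
      _ < (C:ℝ)/2 - Y - 1 := by
          have hcoef : (0:ℝ) < 1 - 2 * Real.sqrt 2 / 3 := by linarith
          nlinarith [mul_pos hP hcoef]
      _ ≤ adamS beta1 beta2 C := hS_lb



lemma adam_mul_le_mul4 {a b c d : ℝ} (h1 : 0 ≤ a) (h2 : a ≤ b) (h3 : c ≤ d) (h4 : 0 ≤ d) :
    a * c ≤ b * d := by nlinarith

lemma adam_dc_nonneg (hb10 : 0 ≤ beta1) (hb11 : beta1 < 1) (j : ℕ) :
    0 ≤ adamDC beta1 beta2 j := by
  unfold adamDC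
  apply div_nonneg _ (Real.sqrt_nonneg _)
  exact mul_nonneg (by linarith) (pow_nonneg (div_nonneg hb10 (Real.sqrt_nonneg _)) j)

lemma adam_sum_dc (hb10 : 0 ≤ beta1) (hb11 : beta1 < 1) {i : ℕ} (hi : i ≤ C) :
    ∑ j ∈ Finset.range i, adamDC beta1 beta2 j ≤ adamD beta1 beta2 C := by
  have h1 : adamD beta1 beta2 C = ∑ j ∈ Finset.range C, adamDC beta1 beta2 j := by
    unfold adamD adamDC
    rw [Finset.mul_sum]
    apply Finset.sum_congr rfl
    intro j _
    rw [div_mul_eq_mul_div, mul_comm]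
  rw [h1]
  apply Finset.sum_le_sum_of_subset_of_nonneg (Finset.range_subset_range.2 hi)
  intro j _ _
  exact adam_dc_nonneg hb10 hb11 j

lemma adam_step_lb (hx : ∀ t, 1 ≤ t → x (t + 1) =
      max (-1) (min 1 (x t - (alpha / Real.sqrt t) * m t / Real.sqrt (v t))))
    (t : ℕ) (ht : 1 ≤ t) :
    min 1 (x t - (alpha / Real.sqrt t) * m t / Real.sqrt (v t)) ≤ x (t + 1) := by
  rw [hx t ht]; exact le_max_right _ _

lemma adam_step_ub (hb10 : 0 ≤ beta1) (hb11 : beta1 < 1) (hb20 : 0 ≤ beta2) (hb21 : beta2 < 1)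
    (halpha : 0 < alpha) (hC : 1 ≤ C)
    (hg : ∀ t, 1 ≤ t → g t = if t % C = 1 then (C : ℝ) else -1)
    (hm0 : m 0 = 0) (hm : ∀ t, 1 ≤ t → m t = beta1 * m (t - 1) + (1 - beta1) * g t)
    (hv0 : v 0 = 0) (hv : ∀ t, 1 ≤ t → v t = beta2 * v (t - 1) + (1 - beta2) * g t ^ 2)
    (hx : ∀ t, 1 ≤ t → x (t + 1) =
      max (-1) (min 1 (x t - (alpha / Real.sqrt t) * m t / Real.sqrt (v t))))
    (t : ℕ) (ht : 1 ≤ t) (hxlb : -1 ≤ x t) :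
    x (t + 1) ≤ x t + (alpha / Real.sqrt t) / Real.sqrt (1 - beta2) := by
  have htpos : (0:ℝ) < (t:ℝ) := by exact_mod_cast ht
  have hα : 0 < alpha / Real.sqrt t := div_pos halpha (Real.sqrt_pos.2 htpos)
  have hw0 : 0 ≤ (alpha / Real.sqrt t) / Real.sqrt (1 - beta2) := by positivity
  have hm1 : -1 ≤ m t := (adam_m_bound hb10 hb11 hg hm0 hm t).1
  have hvt : 1 - beta2 ≤ v t := adam_v_lb hb20 hb21 hg hC hv0 hv t ht
  have hsv : 0 < Real.sqrt (v t) := Real.sqrt_pos.2 (by linarith)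
  have hsb : 0 < Real.sqrt (1 - beta2) := Real.sqrt_pos.2 (by linarith)
  have hΔ : -((alpha / Real.sqrt t) * m t / Real.sqrt (v t)) ≤
      (alpha / Real.sqrt t) / Real.sqrt (1 - beta2) := by
    rcases le_or_gt 0 (m t) with hmp | hmn
    · have : 0 ≤ (alpha / Real.sqrt t) * m t / Real.sqrt (v t) := by positivity
      linarith
    · have h1 : -(m t) / Real.sqrt (v t) ≤ 1 / Real.sqrt (1 - beta2) :=
        div_le_div₀ (by norm_num) (by linarith) hsb (Real.sqrt_le_sqrt hvt)
      have h2 : (alpha / Real.sqrt t) * (-(m t) / Real.sqrt (v t)) ≤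
          (alpha / Real.sqrt t) * (1 / Real.sqrt (1 - beta2)) :=
        mul_le_mul_of_nonneg_left h1 hα.le
      calc -((alpha / Real.sqrt t) * m t / Real.sqrt (v t))
          = (alpha / Real.sqrt t) * (-(m t) / Real.sqrt (v t)) := by ring
        _ ≤ (alpha / Real.sqrt t) * (1 / Real.sqrt (1 - beta2)) := h2
        _ = (alpha / Real.sqrt t) / Real.sqrt (1 - beta2) := by ring
  rw [hx t ht]
  apply max_le (by linarith)
  calc min 1 (x t - (alpha / Real.sqrt t) * m t / Real.sqrt (v t))
      ≤ x t - (alpha / Real.sqrt t) * m t / Real.sqrt (v t) := min_le_right _ _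
    _ ≤ x t + (alpha / Real.sqrt t) / Real.sqrt (1 - beta2) := by linarith

-- α_t monotonicity
lemma adam_alpha_mono (halpha : 0 < alpha) {s t : ℕ} (hs : 1 ≤ s) (hst : s ≤ t) :
    alpha / Real.sqrt t ≤ alpha / Real.sqrt s := by
  have hspos : (0:ℝ) < s := by exact_mod_cast hs
  apply div_le_div_of_nonneg_left halpha.le (Real.sqrt_pos.2 hspos)
  exact Real.sqrt_le_sqrt (by exact_mod_cast hst)

lemma adam_step_le_u (hb10 : 0 ≤ beta1) (hb11 : beta1 < 1) (hb20 : 0 ≤ beta2) (hb21 : beta2 < 1)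
    (hbb : beta1 < Real.sqrt beta2) (halpha : 0 < alpha) (hC4 : 4 ≤ C) (hCeven : 2 ∣ C)
    (hC1 : (1 - beta1) * beta1 ^ (C - 1) * C ≤ 1 - beta1 ^ (C - 1))
    (hC2 : beta2 ^ ((C - 2) / 2) * (C : ℝ) ^ 2 ≤ 1)
    (hpow : beta1 ^ (C / 2 - 1) * C ≤ 1)
    (hg : ∀ t, 1 ≤ t → g t = if t % C = 1 then (C : ℝ) else -1)
    (hm0 : m 0 = 0) (hm : ∀ t, 1 ≤ t → m t = beta1 * m (t - 1) + (1 - beta1) * g t)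
    (hv0 : v 0 = 0) (hv : ∀ t, 1 ≤ t → v t = beta2 * v (t - 1) + (1 - beta2) * g t ^ 2)
    (k j : ℕ) (hj : j < C) :
    (alpha / Real.sqrt (k*C+1+j : ℕ)) * m (k*C+1+j) / Real.sqrt (v (k*C+1+j)) ≤
      adamU beta1 beta2 alpha C k j := by
  have hC2' : 2 ≤ C := by omega
  have ht0 : (0:ℝ) < ((k*C+1 : ℕ) : ℝ) := by positivity
  have htj : (0:ℝ) < ((k*C+1+j : ℕ) : ℝ) := by positivity
  have hαj : 0 < alpha / Real.sqrt (k*C+1+j : ℕ) := div_pos halpha (Real.sqrt_pos.2 htj)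
  have hα0 : 0 < alpha / Real.sqrt (k*C+1 : ℕ) := div_pos halpha (Real.sqrt_pos.2 ht0)
  have hαle : alpha / Real.sqrt (k*C+1+j : ℕ) ≤ alpha / Real.sqrt (k*C+1 : ℕ) :=
    adam_alpha_mono halpha (by omega) (by omega)
  have heq : (alpha / Real.sqrt (k*C+1+j : ℕ)) * m (k*C+1+j) / Real.sqrt (v (k*C+1+j)) =
      (alpha / Real.sqrt (k*C+1+j : ℕ)) * (m (k*C+1+j) / Real.sqrt (v (k*C+1+j))) := by
    ring
  unfold adamU
  split_ifs with hhalf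
  · -- j < C/2 : use down bound
    have hr := adam_ratio_down hb10 hb11 hb20 hb21 hbb hC2' hC1 hg hm0 hm hv0 hv k j hj
    rw [heq]
    have hd0 : 0 ≤ (1 - beta1) * (beta1 / Real.sqrt beta2) ^ j / Real.sqrt (1 - beta2) := by
      apply div_nonneg _ (Real.sqrt_nonneg _)
      exact mul_nonneg (by linarith) (pow_nonneg (div_nonneg hb10 (Real.sqrt_nonneg _)) j)
    calc (alpha / Real.sqrt (k*C+1+j : ℕ)) * (m (k*C+1+j) / Real.sqrt (v (k*C+1+j)))
        ≤ (alpha / Real.sqrt (k*C+1 : ℕ)) *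
          ((1 - beta1) * (beta1 / Real.sqrt beta2) ^ j / Real.sqrt (1 - beta2)) :=
          adam_mul_le_mul4 hαj.le hαle hr hd0
      _ = (alpha / Real.sqrt (k*C+1 : ℕ)) * adamDC beta1 beta2 j := by unfold adamDC; ring
  · -- C/2 ≤ j : use up bound
    push_neg at hhalf
    have hr := adam_ratio_up hb10 hb11 hb20 hb21 hbb hC4 hCeven hC1 hC2 hpow hg hm0 hm hv0 hv
      k j hhalf hj
    have hL : 1/2 ≤ adamL beta1 C j := adam_L_ge_half hb10 hb11 hC4 hpow j hhalf
    have hup0 : -(adamL beta1 C j) / Real.sqrt (1 + beta2) ≤ 0 := by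
      apply div_nonpos_of_nonpos_of_nonneg (by linarith) (Real.sqrt_nonneg _)
    have hαC : alpha / Real.sqrt (k*C+1+C : ℕ) ≤ alpha / Real.sqrt (k*C+1+j : ℕ) :=
      adam_alpha_mono halpha (by omega) (by omega)
    rw [heq]
    calc (alpha / Real.sqrt (k*C+1+j : ℕ)) * (m (k*C+1+j) / Real.sqrt (v (k*C+1+j)))
        ≤ (alpha / Real.sqrt (k*C+1+j : ℕ)) * (-(adamL beta1 C j) / Real.sqrt (1 + beta2)) :=
          mul_le_mul_of_nonneg_left hr hαj.le
      _ ≤ (alpha / Real.sqrt (k*C+1+C : ℕ)) * (-(adamL beta1 C j) / Real.sqrt (1 + beta2)) :=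
          mul_le_mul_of_nonpos_right hαC hup0

lemma adam_u_le_d (hb10 : 0 ≤ beta1) (hb11 : beta1 < 1) (hb20 : 0 ≤ beta2) (hb21 : beta2 < 1)
    (halpha : 0 < alpha) (hC4 : 4 ≤ C) (hpow : beta1 ^ (C / 2 - 1) * C ≤ 1) (k j : ℕ) :
    adamU beta1 beta2 alpha C k j ≤ (alpha / Real.sqrt (k*C+1 : ℕ)) * adamDC beta1 beta2 j := by
  unfold adamU
  split_ifs with hhalf
  · exact le_rfl
  · push_neg at hhalf
    have ht0 : (0:ℝ) < ((k*C+1 : ℕ) : ℝ) := by positivity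
    have hα0 : 0 < alpha / Real.sqrt (k*C+1 : ℕ) := div_pos halpha (Real.sqrt_pos.2 ht0)
    have hL : 1/2 ≤ adamL beta1 C j := adam_L_ge_half hb10 hb11 hC4 hpow j hhalf
    have hup0 : -(adamL beta1 C j) / Real.sqrt (1 + beta2) ≤ 0 :=
      div_nonpos_of_nonpos_of_nonneg (by linarith) (Real.sqrt_nonneg _)
    have h1 : (alpha / Real.sqrt (k*C+1+C : ℕ)) * (-(adamL beta1 C j) / Real.sqrt (1 + beta2)) ≤ 0 := by
      apply mul_nonpos_of_nonneg_of_nonpos _ hup0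
      positivity
    have h2 : 0 ≤ (alpha / Real.sqrt (k*C+1 : ℕ)) * adamDC beta1 beta2 j :=
      mul_nonneg hα0.le (adam_dc_nonneg hb10 hb11 j)
    linarith

lemma adam_sum_u (hb10 : 0 ≤ beta1) (hb11 : beta1 < 1) (hb20 : 0 ≤ beta2) (hb21 : beta2 < 1)
    (halpha : 0 < alpha) (hC4 : 4 ≤ C) (k : ℕ) :
    ∑ j ∈ Finset.range C, adamU beta1 beta2 alpha C k j ≤
      (alpha / Real.sqrt (k*C+1 : ℕ)) * adamD beta1 beta2 C -
      (alpha / Real.sqrt (k*C+1+C : ℕ)) * (adamS beta1 beta2 C / Real.sqrt (1 + beta2)) := by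
  have hsplit : Finset.range C = Finset.Ico 0 C := by rw [Finset.range_eq_Ico]
  rw [hsplit, ← Finset.sum_Ico_consecutive _ (Nat.zero_le (C/2)) (by omega : C/2 ≤ C)]
  have h1 : ∑ j ∈ Finset.Ico 0 (C/2), adamU beta1 beta2 alpha C k j =
      ∑ j ∈ Finset.Ico 0 (C/2), (alpha / Real.sqrt (k*C+1 : ℕ)) * adamDC beta1 beta2 j := by
    apply Finset.sum_congr rfl
    intro j hj
    rw [Finset.mem_Ico] at hj
    unfold adamU
    rw [if_pos hj.2]
  have h2 : ∑ j ∈ Finset.Ico (C/2) C, adamU beta1 beta2 alpha C k j =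
      ∑ j ∈ Finset.Ico (C/2) C,
        -((alpha / Real.sqrt (k*C+1+C : ℕ)) * (adamL beta1 C j / Real.sqrt (1+beta2))) := by
    apply Finset.sum_congr rfl
    intro j hj
    rw [Finset.mem_Ico] at hj
    unfold adamU
    rw [if_neg (by omega)]
    ring
  have h2' : ∑ j ∈ Finset.Ico (C/2) C,
      ((alpha / Real.sqrt (k*C+1+C : ℕ)) * (adamL beta1 C j / Real.sqrt (1+beta2))) =
      (alpha / Real.sqrt (k*C+1+C : ℕ)) * (adamS beta1 beta2 C / Real.sqrt (1 + beta2)) := by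
    rw [eq_comm]
    unfold adamS
    rw [Finset.sum_div, Finset.mul_sum]
  rw [h1, h2, Finset.sum_neg_distrib, h2']
  have h3 : ∑ j ∈ Finset.Ico 0 (C/2), (alpha / Real.sqrt (k*C+1 : ℕ)) * adamDC beta1 beta2 j ≤
      (alpha / Real.sqrt (k*C+1 : ℕ)) * adamD beta1 beta2 C := by
    rw [← Finset.mul_sum]
    apply mul_le_mul_of_nonneg_left _ (by positivity)
    rw [← Finset.range_eq_Ico]
    exact adam_sum_dc hb10 hb11 (show C/2 ≤ C by omega)
  linarith



lemma adamD_eq (hb10 : 0 ≤ beta1) :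
    adamD beta1 beta2 C = ∑ j ∈ Finset.range C, adamDC beta1 beta2 j := by
  unfold adamD adamDC
  rw [Finset.mul_sum]
  apply Finset.sum_congr rfl
  intro j _
  rw [div_mul_eq_mul_div, mul_comm]

lemma adam_block_disp (hb10 : 0 ≤ beta1) (hb11 : beta1 < 1) (hb20 : 0 ≤ beta2) (hb21 : beta2 < 1)
    (hbb : beta1 < Real.sqrt beta2) (halpha : 0 < alpha) (hC4 : 4 ≤ C) (hCeven : 2 ∣ C)
    (hC1 : (1 - beta1) * beta1 ^ (C - 1) * C ≤ 1 - beta1 ^ (C - 1))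
    (hC2 : beta2 ^ ((C - 2) / 2) * (C : ℝ) ^ 2 ≤ 1)
    (hpow : beta1 ^ (C / 2 - 1) * C ≤ 1)
    (hx1 : x 1 ∈ Set.Icc (-1 : ℝ) 1)
    (hg : ∀ t, 1 ≤ t → g t = if t % C = 1 then (C : ℝ) else -1)
    (hm0 : m 0 = 0) (hm : ∀ t, 1 ≤ t → m t = beta1 * m (t - 1) + (1 - beta1) * g t)
    (hv0 : v 0 = 0) (hv : ∀ t, 1 ≤ t → v t = beta2 * v (t - 1) + (1 - beta2) * g t ^ 2)
    (hx : ∀ t, 1 ≤ t → x (t + 1) =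
      max (-1) (min 1 (x t - (alpha / Real.sqrt t) * m t / Real.sqrt (v t))))
    (k : ℕ) : ∀ i, i ≤ C →
    min (1 - (alpha / Real.sqrt (k*C+1 : ℕ)) * ∑ j ∈ Finset.range i, adamDC beta1 beta2 j)
        (x (k*C+1) - ∑ j ∈ Finset.range i, adamU beta1 beta2 alpha C k j) ≤ x (k*C+1+i) := by
  have ht0 : (0:ℝ) < ((k*C+1 : ℕ) : ℝ) := by positivity
  have hα0 : 0 < alpha / Real.sqrt (k*C+1 : ℕ) := div_pos halpha (Real.sqrt_pos.2 ht0)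
  intro i
  induction i with
  | zero =>
    intro _
    simp only [Finset.range_zero, Finset.sum_empty, mul_zero, sub_zero, Nat.add_zero]
    exact min_le_right _ _
  | succ i ih =>
    intro hi
    have hiC : i < C := by omega
    have ihh := ih (by omega)
    have hstep := adam_step_lb hx (k*C+1+i) (by omega)
    have hΔu := adam_step_le_u hb10 hb11 hb20 hb21 hbb halpha hC4 hCeven hC1 hC2 hpow
      hg hm0 hm hv0 hv k i hiC
    have hud := adam_u_le_d hb10 hb11 hb20 hb21 halpha hC4 hpow k i
    have hd0 : 0 ≤ adamDC beta1 beta2 i := adam_dc_nonneg hb10 hb11 i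
    have hsum0 : 0 ≤ ∑ j ∈ Finset.range (i+1), adamDC beta1 beta2 j :=
      Finset.sum_nonneg fun j _ => adam_dc_nonneg hb10 hb11 j
    set A := 1 - (alpha / Real.sqrt (k*C+1 : ℕ)) * ∑ j ∈ Finset.range i, adamDC beta1 beta2 j
    set B := x (k*C+1) - ∑ j ∈ Finset.range i, adamU beta1 beta2 alpha C k j
    set A' := 1 - (alpha / Real.sqrt (k*C+1 : ℕ)) * ∑ j ∈ Finset.range (i+1), adamDC beta1 beta2 j
      with hA'
    set B' := x (k*C+1) - ∑ j ∈ Finset.range (i+1), adamU beta1 beta2 alpha C k j with hB'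
    have hA'A : A' = A - (alpha / Real.sqrt (k*C+1 : ℕ)) * adamDC beta1 beta2 i := by
      rw [hA', Finset.sum_range_succ]; ring
    have hB'B : B' = B - adamU beta1 beta2 alpha C k i := by
      rw [hB', Finset.sum_range_succ]; ring
    have hkey : min A' B' ≤ x (k*C+1+i) -
        (alpha / Real.sqrt (k*C+1+i : ℕ)) * m (k*C+1+i) / Real.sqrt (v (k*C+1+i)) := by
      have h1 : min A' B' ≤ min A B - adamU beta1 beta2 alpha C k i := by
        rw [← min_sub_sub_right]
        apply min_le_min _ (le_of_eq hB'B)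
        rw [hA'A]
        have := mul_le_mul_of_nonneg_left hud hα0.le
        linarith [mul_le_mul_of_nonneg_left hud (le_of_lt hα0)]
      have h2 : min A B - adamU beta1 beta2 alpha C k i ≤
          x (k*C+1+i) - adamU beta1 beta2 alpha C k i := by linarith
      linarith
    have hA'1 : A' ≤ 1 := by
      rw [hA']
      nlinarith
    have hminle : min A' B' ≤ min 1 (x (k*C+1+i) -
        (alpha / Real.sqrt (k*C+1+i : ℕ)) * m (k*C+1+i) / Real.sqrt (v (k*C+1+i))) := by
      apply le_min _ hkey
      calc min A' B' ≤ A' := min_le_left _ _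
        _ ≤ 1 := hA'1
    have heq : k*C+1+(i+1) = (k*C+1+i)+1 := by omega
    rw [heq]
    exact le_trans hminle hstep

lemma adam_block_main (hb10 : 0 ≤ beta1) (hb11 : beta1 < 1) (hb20 : 0 ≤ beta2) (hb21 : beta2 < 1)
    (hbb : beta1 < Real.sqrt beta2) (halpha : 0 < alpha) (hC4 : 4 ≤ C) (hCeven : 2 ∣ C)
    (hC1 : (1 - beta1) * beta1 ^ (C - 1) * C ≤ 1 - beta1 ^ (C - 1))
    (hC2 : beta2 ^ ((C - 2) / 2) * (C : ℝ) ^ 2 ≤ 1)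
    (hpow : beta1 ^ (C / 2 - 1) * C ≤ 1)
    (hx1 : x 1 ∈ Set.Icc (-1 : ℝ) 1)
    (hg : ∀ t, 1 ≤ t → g t = if t % C = 1 then (C : ℝ) else -1)
    (hm0 : m 0 = 0) (hm : ∀ t, 1 ≤ t → m t = beta1 * m (t - 1) + (1 - beta1) * g t)
    (hv0 : v 0 = 0) (hv : ∀ t, 1 ≤ t → v t = beta2 * v (t - 1) + (1 - beta2) * g t ^ 2)
    (hx : ∀ t, 1 ≤ t → x (t + 1) =
      max (-1) (min 1 (x t - (alpha / Real.sqrt t) * m t / Real.sqrt (v t))))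
    (k : ℕ) :
    min (1 - (alpha / Real.sqrt (k*C+1 : ℕ)) * adamD beta1 beta2 C)
        (x (k*C+1) + ((alpha / Real.sqrt (k*C+1+C : ℕ)) *
            (adamS beta1 beta2 C / Real.sqrt (1 + beta2)) -
          (alpha / Real.sqrt (k*C+1 : ℕ)) * adamD beta1 beta2 C)) ≤ x ((k+1)*C+1) := by
  have hdisp := adam_block_disp hb10 hb11 hb20 hb21 hbb halpha hC4 hCeven hC1 hC2 hpow hx1
    hg hm0 hm hv0 hv hx k C (le_refl C)
  have hsumu := adam_sum_u hb10 hb11 hb20 hb21 halpha hC4 (k := k)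
  have heq : (k+1)*C+1 = k*C+1+C := by ring_nf
  rw [heq]
  refine le_trans (min_le_min ?_ ?_) hdisp
  · rw [adamD_eq hb10]
  · linarith


lemma adam_alpha_small (halpha : 0 < alpha) (hC : 1 ≤ C) (c : ℝ) (hc : 0 < c) :
    ∃ K : ℕ, ∀ k, K ≤ k → alpha / Real.sqrt (k*C+1 : ℕ) ≤ c := by
  refine ⟨⌈(alpha/c)^2⌉₊, fun k hk => ?_⟩
  have h1 : ((alpha/c)^2 : ℝ) ≤ (k*C+1 : ℕ) := by
    calc ((alpha/c)^2 : ℝ) ≤ ⌈(alpha/c)^2⌉₊ := Nat.le_ceil _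
      _ ≤ (k : ℝ) := by exact_mod_cast hk
      _ ≤ ((k*C+1 : ℕ) : ℝ) := by
          have : k ≤ k*C+1 := by calc k = k*1 := (mul_one k).symm
                                    _ ≤ k*C := Nat.mul_le_mul_left k hC
                                    _ ≤ k*C+1 := Nat.le_succ _
          exact_mod_cast this
  have h2 : alpha / c ≤ Real.sqrt (k*C+1 : ℕ) := by
    have := Real.sqrt_le_sqrt h1
    rwa [Real.sqrt_sq (by positivity : (0:ℝ) ≤ alpha/c)] at this
  have h3 : 0 < Real.sqrt (k*C+1 : ℕ) := by
    apply Real.sqrt_pos.2; positivity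
  rw [div_le_iff₀ h3]
  calc alpha = (alpha / c) * c := by field_simp
    _ ≤ Real.sqrt (k*C+1 : ℕ) * c := by apply mul_le_mul_of_nonneg_right h2 hc.le
    _ = c * Real.sqrt (k*C+1 : ℕ) := by ring

set_option maxHeartbeats 2000000 in
lemma adam_x_eventually_nonneg
    (hb10 : 0 ≤ beta1) (hb11 : beta1 < 1) (hb20 : 0 ≤ beta2) (hb21 : beta2 < 1)
    (hbb : beta1 < Real.sqrt beta2) (halpha : 0 < alpha) (hC4 : 4 ≤ C) (hCeven : 2 ∣ C)
    (hC1 : (1 - beta1) * beta1 ^ (C - 1) * C ≤ 1 - beta1 ^ (C - 1))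
    (hC2 : beta2 ^ ((C - 2) / 2) * (C : ℝ) ^ 2 ≤ 1)
    (hpow : beta1 ^ (C / 2 - 1) * C ≤ 1)
    (hU : adamD beta1 beta2 C < adamS beta1 beta2 C / Real.sqrt (1 + beta2))
    (hx1 : x 1 ∈ Set.Icc (-1 : ℝ) 1)
    (hg : ∀ t, 1 ≤ t → g t = if t % C = 1 then (C : ℝ) else -1)
    (hm0 : m 0 = 0) (hm : ∀ t, 1 ≤ t → m t = beta1 * m (t - 1) + (1 - beta1) * g t)
    (hv0 : v 0 = 0) (hv : ∀ t, 1 ≤ t → v t = beta2 * v (t - 1) + (1 - beta2) * g t ^ 2)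
    (hx : ∀ t, 1 ≤ t → x (t + 1) =
      max (-1) (min 1 (x t - (alpha / Real.sqrt t) * m t / Real.sqrt (v t)))) :
    ∃ K : ℕ, ∀ k, K ≤ k → 0 ≤ x (k*C+1) := by
  set DD := adamD beta1 beta2 C with hDDdef
  set U := adamS beta1 beta2 C / Real.sqrt (1 + beta2) with hUdef
  have hD0 : 0 ≤ DD := adam_D_nonneg hb10 hb11 hbb
  have hU0 : 0 < U := lt_of_le_of_lt hD0 hU
  set nu := (U - DD)/2 with hnudef
  have hnu : 0 < nu := by rw [hnudef]; linarith
  set c := (U + DD)/(2*U) with hcdef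
  have hc0 : 0 < c := by rw [hcdef]; positivity
  have hc1 : c < 1 := by
    rw [hcdef, div_lt_one (by linarith)]
    linarith
  have hcsq : c^2 < 1 := by nlinarith
  -- threshold for the ratio bound
  set K0 := max (⌈(C:ℝ)/(1-c^2)⌉₊) 1 with hK0def
  have hratio : ∀ k, K0 ≤ k →
      (alpha / Real.sqrt (k*C+1 : ℕ)) * ((U + DD)/2) ≤
        (alpha / Real.sqrt (k*C+1+C : ℕ)) * U := by
    intro k hk
    have ht0pos : (0:ℝ) < ((k*C+1 : ℕ) : ℝ) := by positivity
    have htCpos : (0:ℝ) < ((k*C+1+C : ℕ) : ℝ) := by positivity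
    have hs0 : 0 < Real.sqrt ((k*C+1 : ℕ) : ℝ) := Real.sqrt_pos.2 ht0pos
    have hsC : 0 < Real.sqrt ((k*C+1+C : ℕ) : ℝ) := Real.sqrt_pos.2 htCpos
    have hkc : (C:ℝ)/(1-c^2) ≤ ((k*C+1 : ℕ):ℝ) := by
      calc (C:ℝ)/(1-c^2) ≤ ⌈(C:ℝ)/(1-c^2)⌉₊ := Nat.le_ceil _
        _ ≤ (k:ℝ) := by exact_mod_cast le_trans (le_max_left _ _) hk
        _ ≤ ((k*C+1 : ℕ):ℝ) := by
            have : k ≤ k*C+1 := by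
              calc k = k*1 := (mul_one k).symm
                _ ≤ k*C := Nat.mul_le_mul_left k (by omega)
                _ ≤ k*C+1 := Nat.le_succ _
            exact_mod_cast this
    have hkey : c^2 * ((k*C+1+C : ℕ):ℝ) ≤ ((k*C+1 : ℕ):ℝ) := by
      have h1 : (C:ℝ) ≤ ((k*C+1 : ℕ):ℝ) * (1-c^2) := by
        rw [div_le_iff₀ (by linarith)] at hkc
        linarith
      have h2 : ((k*C+1+C : ℕ):ℝ) = ((k*C+1 : ℕ):ℝ) + C := by push_cast; ring
      nlinarith [sq_nonneg c]
    have hsqle : c * Real.sqrt ((k*C+1+C : ℕ):ℝ) ≤ Real.sqrt ((k*C+1 : ℕ):ℝ) := by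
      have h1 : Real.sqrt (c^2 * ((k*C+1+C : ℕ):ℝ)) ≤ Real.sqrt ((k*C+1 : ℕ):ℝ) :=
        Real.sqrt_le_sqrt hkey
      rwa [Real.sqrt_mul (sq_nonneg c), Real.sqrt_sq hc0.le] at h1
    have hαα : c * (alpha / Real.sqrt (k*C+1 : ℕ)) ≤ alpha / Real.sqrt (k*C+1+C : ℕ) := by
      rw [mul_div_assoc', div_le_div_iff₀ hs0 hsC]
      calc c * alpha * Real.sqrt ((k*C+1+C : ℕ):ℝ)
          = alpha * (c * Real.sqrt ((k*C+1+C : ℕ):ℝ)) := by ring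
        _ ≤ alpha * Real.sqrt ((k*C+1 : ℕ):ℝ) := by
            apply mul_le_mul_of_nonneg_left hsqle halpha.le
    have hcU : c * U = (U + DD)/2 := by
      rw [hcdef]; field_simp
    calc (alpha / Real.sqrt (k*C+1 : ℕ)) * ((U + DD)/2)
        = (c * (alpha / Real.sqrt (k*C+1 : ℕ))) * U := by rw [← hcU]; ring
      _ ≤ (alpha / Real.sqrt (k*C+1+C : ℕ)) * U :=
          mul_le_mul_of_nonneg_right hαα hU0.le
  -- threshold for a0 * DD ≤ 1/2
  obtain ⟨K2, hK2⟩ := adam_alpha_small (C := C) halpha (by omega) (1/(2*(DD+1))) (by positivity)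
  set K1 := max K0 K2 with hK1def
  have hblockB : ∀ k, K1 ≤ k →
      min (1/2) (x (k*C+1) + nu * (alpha / Real.sqrt (k*C+1 : ℕ))) ≤ x ((k+1)*C+1) := by
    intro k hk
    have hmain := adam_block_main hb10 hb11 hb20 hb21 hbb halpha hC4 hCeven hC1 hC2 hpow hx1
      hg hm0 hm hv0 hv hx k
    have ha0pos : 0 < alpha / Real.sqrt (k*C+1 : ℕ) := by
      apply div_pos halpha (Real.sqrt_pos.2 (by positivity))
    have h1 : (alpha / Real.sqrt (k*C+1 : ℕ)) * DD ≤ 1/2 := by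
      have := hK2 k (le_trans (le_max_right _ _) hk)
      calc (alpha / Real.sqrt (k*C+1 : ℕ)) * DD ≤ (1/(2*(DD+1))) * DD := by
            apply mul_le_mul_of_nonneg_right this hD0
        _ ≤ 1/2 := by
            rw [div_mul_eq_mul_div, div_le_div_iff₀ (by positivity) (by norm_num)]
            nlinarith
    have h2 : (alpha / Real.sqrt (k*C+1 : ℕ)) * ((U+DD)/2) ≤
        (alpha / Real.sqrt (k*C+1+C : ℕ)) * U := hratio k (le_trans (le_max_left _ _) hk)
    refine le_trans (min_le_min ?_ ?_) hmain
    · linarith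
    · have : nu * (alpha / Real.sqrt (k*C+1 : ℕ)) ≤
          (alpha / Real.sqrt (k*C+1+C : ℕ)) * U - (alpha / Real.sqrt (k*C+1 : ℕ)) * DD := by
        have hexp : nu * (alpha / Real.sqrt (k*C+1 : ℕ)) =
            (alpha / Real.sqrt (k*C+1 : ℕ)) * ((U+DD)/2) -
            (alpha / Real.sqrt (k*C+1 : ℕ)) * DD := by
          rw [hnudef]; ring
        linarith
      linarith
  -- positivity is preserved
  have hPstep : ∀ k, K1 ≤ k → 0 ≤ x (k*C+1) → 0 ≤ x ((k+1)*C+1) := by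
    intro k hk hp
    refine le_trans (le_min (by norm_num) ?_) (hblockB k hk)
    have ha0pos : 0 < alpha / Real.sqrt (k*C+1 : ℕ) := by
      apply div_pos halpha (Real.sqrt_pos.2 (by positivity))
    have := mul_nonneg hnu.le ha0pos.le
    linarith
  -- there exists a k ≥ K1 with x (k*C+1) ≥ 0
  have hPexists : ∃ k, K1 ≤ k ∧ 0 ≤ x (k*C+1) := by
    by_contra hcon
    push_neg at hcon
    have hneg : ∀ k, K1 ≤ k → x (k*C+1) < 0 := fun k hk => hcon k hk
    have hgrow : ∀ k, K1 ≤ k →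
        x (k*C+1) + nu * (alpha / Real.sqrt (k*C+1 : ℕ)) ≤ x ((k+1)*C+1) := by
      intro k hk
      have hB := hblockB k hk
      have hxn := hneg (k+1) (by omega)
      rcases le_total (1/2 : ℝ) (x (k*C+1) + nu * (alpha / Real.sqrt (k*C+1 : ℕ))) with h | h
      · exfalso
        rw [min_eq_left h] at hB
        linarith
      · rwa [min_eq_right h] at hB
    -- iterate
    have hiter : ∀ n : ℕ, x (K1*C+1) +
        nu * ∑ i ∈ Finset.range n, (alpha / Real.sqrt ((K1+i)*C+1 : ℕ)) ≤ x ((K1+n)*C+1) := by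
      intro n
      induction n with
      | zero => simp
      | succ n ih =>
        have hg1 := hgrow (K1+n) (by omega)
        have he : (K1+n+1) = (K1+(n+1)) := by omega
        rw [Finset.sum_range_succ]
        calc x (K1*C+1) + nu * (∑ i ∈ Finset.range n, (alpha / Real.sqrt ((K1+i)*C+1 : ℕ))
              + alpha / Real.sqrt ((K1+n)*C+1 : ℕ))
            = (x (K1*C+1) + nu * ∑ i ∈ Finset.range n, (alpha / Real.sqrt ((K1+i)*C+1 : ℕ)))
              + nu * (alpha / Real.sqrt ((K1+n)*C+1 : ℕ)) := by ring
          _ ≤ x ((K1+n)*C+1) + nu * (alpha / Real.sqrt ((K1+n)*C+1 : ℕ)) := by linarith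
          _ ≤ x ((K1+n+1)*C+1) := hg1
    -- choose n large
    set B := (K1*C + C + 1 : ℕ) with hBdef
    have hBpos : (0:ℝ) < B := by positivity
    set n := ⌈(B:ℝ) * (1/(alpha*nu))^2⌉₊ + 1 with hndef
    have hn1 : 1 ≤ n := by omega
    have hnB : ((K1+n)*C+1 : ℕ) ≤ n * B := by
      have : (K1+n)*C+1 = K1*C + n*C + 1 := by ring_nf
      calc (K1+n)*C+1 = K1*C + n*C + 1 := by ring_nf
        _ ≤ n*(K1*C) + n*C + n := by
            have h1 : K1*C ≤ n*(K1*C) := Nat.le_mul_of_pos_left _ (by omega)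
            exact Nat.add_le_add (Nat.add_le_add h1 (le_refl (n*C))) hn1
        _ = n * B := by rw [hBdef]; ring
    have hsum_lb : (n:ℝ) * (alpha / Real.sqrt ((K1+n)*C+1 : ℕ)) ≤
        ∑ i ∈ Finset.range n, (alpha / Real.sqrt ((K1+i)*C+1 : ℕ)) := by
      have := Finset.card_nsmul_le_sum (Finset.range n)
        (fun i => alpha / Real.sqrt ((K1+i)*C+1 : ℕ)) (alpha / Real.sqrt ((K1+n)*C+1 : ℕ))
        (fun i hi => by
          apply adam_alpha_mono halpha (by omega)
          have : i < n := Finset.mem_range.1 hi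
          have h1 : (K1+i)*C+1 ≤ (K1+n)*C+1 := by
            have : (K1+i)*C ≤ (K1+n)*C := Nat.mul_le_mul_right C (by omega)
            omega
          exact h1)
      rwa [Finset.card_range, nsmul_eq_mul] at this
    have hfinal_lb : 1 ≤ nu * ((n:ℝ) * (alpha / Real.sqrt ((K1+n)*C+1 : ℕ))) := by
      have hnpos : (0:ℝ) < n := by exact_mod_cast hn1
      have hsq : Real.sqrt ((K1+n)*C+1 : ℕ) ≤ Real.sqrt n * Real.sqrt B := by
        rw [← Real.sqrt_mul (le_of_lt hnpos)]
        apply Real.sqrt_le_sqrt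
        calc (((K1+n)*C+1 : ℕ) : ℝ) ≤ ((n * B : ℕ) : ℝ) := by exact_mod_cast hnB
          _ = (n:ℝ) * B := by push_cast; ring
      have hq : (B:ℝ) * (1/(alpha*nu))^2 ≤ n := by
        calc (B:ℝ) * (1/(alpha*nu))^2 ≤ ⌈(B:ℝ) * (1/(alpha*nu))^2⌉₊ := Nat.le_ceil _
          _ ≤ (n:ℝ) := by
              have hle : ⌈(B:ℝ) * (1/(alpha*nu))^2⌉₊ ≤ n := by rw [hndef]; omega
              exact_mod_cast hle
      have hsqn : Real.sqrt B * (1/(alpha*nu)) ≤ Real.sqrt n := by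
        have h1 : Real.sqrt ((B:ℝ) * (1/(alpha*nu))^2) ≤ Real.sqrt n := Real.sqrt_le_sqrt hq
        rwa [Real.sqrt_mul (by positivity), Real.sqrt_sq (by positivity)] at h1
      have hsB : 0 < Real.sqrt B := Real.sqrt_pos.2 hBpos
      have hsn : 0 < Real.sqrt n := Real.sqrt_pos.2 hnpos
      have hsKn : 0 < Real.sqrt (((K1+n)*C+1 : ℕ) : ℝ) := by
        apply Real.sqrt_pos.2; positivity
      -- ν n α / √((K1+n)C+1) ≥ ν n α/(√n √B) = ν α √n/√B ≥ ν α (√B/(αν))/√B = 1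
      have h1 : (n:ℝ) * alpha / (Real.sqrt n * Real.sqrt B) ≤
          (n:ℝ) * (alpha / Real.sqrt ((K1+n)*C+1 : ℕ)) := by
        rw [mul_div_assoc]
        apply mul_le_mul_of_nonneg_left _ (le_of_lt hnpos)
        apply div_le_div_of_nonneg_left halpha.le hsKn hsq
      have h2 : (n:ℝ) * alpha / (Real.sqrt n * Real.sqrt B) =
          alpha * Real.sqrt n / Real.sqrt B := by
        rw [div_eq_div_iff (mul_pos hsn hsB).ne' hsB.ne']
        calc (n:ℝ) * alpha * Real.sqrt B
            = alpha * ((Real.sqrt n * Real.sqrt n) * Real.sqrt B) := by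
              rw [Real.mul_self_sqrt hnpos.le]; ring
          _ = alpha * Real.sqrt n * (Real.sqrt n * Real.sqrt B) := by ring
      have hBle : Real.sqrt B ≤ alpha * nu * Real.sqrt n := by
        calc Real.sqrt B = (alpha*nu) * (Real.sqrt B * (1/(alpha*nu))) := by
              field_simp
          _ ≤ (alpha*nu) * Real.sqrt n :=
              mul_le_mul_of_nonneg_left hsqn (by positivity)
          _ = alpha * nu * Real.sqrt n := by ring
      have h3 : 1/nu ≤ alpha * Real.sqrt n / Real.sqrt B := by
        rw [div_le_div_iff₀ hnu hsB]
        calc 1 * Real.sqrt B = Real.sqrt B := one_mul _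
          _ ≤ alpha * nu * Real.sqrt n := hBle
          _ = alpha * Real.sqrt n * nu := by ring
      have h4 : 1/nu ≤ (n:ℝ) * (alpha / Real.sqrt ((K1+n)*C+1 : ℕ)) := by
        rw [h2] at h1
        linarith
      calc (1:ℝ) = nu * (1/nu) := by field_simp
        _ ≤ nu * ((n:ℝ) * (alpha / Real.sqrt ((K1+n)*C+1 : ℕ))) :=
            mul_le_mul_of_nonneg_left h4 hnu.le
    have hxlb : -1 ≤ x (K1*C+1) :=
      (adam_x_bound hx1 hx (K1*C+1) (by omega)).1
    have hcontra := hiter n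
    have hxn := hneg (K1+n) (by omega)
    have hmul := mul_le_mul_of_nonneg_left hsum_lb hnu.le
    linarith
  obtain ⟨k0, hk0K, hk0P⟩ := hPexists
  refine ⟨k0, fun k hk => ?_⟩
  induction k, hk using Nat.le_induction with
  | base => exact hk0P
  | succ k hkk ih => exact hPstep k (le_trans hk0K hkk) ih



lemma adam_mod_bad (hC : 2 ≤ C) (k : ℕ) : (k*C+1) % C = 1 := by
  rw [mul_comm, Nat.mul_add_mod]
  exact Nat.mod_eq_of_lt (by omega)

lemma adam_mod_good (hC : 2 ≤ C) (k j : ℕ) (hj1 : 1 ≤ j) (hj2 : j < C) :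
    (k*C+1+j) % C ≠ 1 := by
  have h : k * C + 1 + j = C * k + (1 + j) := by ring
  rw [h, Nat.mul_add_mod]
  rcases Nat.lt_or_ge (1 + j) C with h' | h'
  · rw [Nat.mod_eq_of_lt h']; omega
  · have : 1 + j = C := by omega
    rw [this, Nat.mod_self]; omega

lemma adam_within_ub (hb10 : 0 ≤ beta1) (hb11 : beta1 < 1) (hb20 : 0 ≤ beta2) (hb21 : beta2 < 1)
    (halpha : 0 < alpha) (hC : 1 ≤ C)
    (hx1 : x 1 ∈ Set.Icc (-1 : ℝ) 1)
    (hg : ∀ t, 1 ≤ t → g t = if t % C = 1 then (C : ℝ) else -1)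
    (hm0 : m 0 = 0) (hm : ∀ t, 1 ≤ t → m t = beta1 * m (t - 1) + (1 - beta1) * g t)
    (hv0 : v 0 = 0) (hv : ∀ t, 1 ≤ t → v t = beta2 * v (t - 1) + (1 - beta2) * g t ^ 2)
    (hx : ∀ t, 1 ≤ t → x (t + 1) =
      max (-1) (min 1 (x t - (alpha / Real.sqrt t) * m t / Real.sqrt (v t))))
    (k : ℕ) : ∀ i, i ≤ C →
    x (k*C+1+i) ≤ x (k*C+1) + i * ((alpha / Real.sqrt (k*C+1 : ℕ)) / Real.sqrt (1-beta2)) := by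
  have hw0 : 0 ≤ (alpha / Real.sqrt (k*C+1 : ℕ)) / Real.sqrt (1-beta2) := by positivity
  intro i
  induction i with
  | zero => simp
  | succ i ih =>
    intro hi
    have ihh := ih (by omega)
    have hxlb : -1 ≤ x (k*C+1+i) := (adam_x_bound hx1 hx (k*C+1+i) (by omega)).1
    have hstep := adam_step_ub hb10 hb11 hb20 hb21 halpha hC hg hm0 hm hv0 hv hx
      (k*C+1+i) (by omega) hxlb
    have hαm : alpha / Real.sqrt (k*C+1+i : ℕ) ≤ alpha / Real.sqrt (k*C+1 : ℕ) :=
      adam_alpha_mono halpha (by omega) (by omega)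
    have hsb : 0 < Real.sqrt (1 - beta2) := Real.sqrt_pos.2 (by linarith)
    have hdiv : (alpha / Real.sqrt (k*C+1+i : ℕ)) / Real.sqrt (1-beta2) ≤
        (alpha / Real.sqrt (k*C+1 : ℕ)) / Real.sqrt (1-beta2) :=
      div_le_div_of_nonneg_right hαm hsb.le
    have heq : k*C+1+(i+1) = (k*C+1+i)+1 := by omega
    rw [heq, Nat.cast_succ]
    calc x ((k*C+1+i)+1) ≤ x (k*C+1+i) + (alpha / Real.sqrt (k*C+1+i : ℕ)) / Real.sqrt (1-beta2) := hstep
      _ ≤ x (k*C+1) + i * ((alpha / Real.sqrt (k*C+1 : ℕ)) / Real.sqrt (1-beta2))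
          + (alpha / Real.sqrt (k*C+1 : ℕ)) / Real.sqrt (1-beta2) := by linarith
      _ = x (k*C+1) + ((i:ℝ) + 1) * ((alpha / Real.sqrt (k*C+1 : ℕ)) / Real.sqrt (1-beta2)) := by ring

lemma adam_sum_block_aux (F : ℕ → ℝ) (a : ℕ) :
    ∑ t ∈ Finset.Ioc a (a+C), F t = ∑ j ∈ Finset.range C, F (a+1+j) := by
  have h1 : Finset.Ioc a (a+C) = Finset.Ico (a+1) (a+1+C) := by
    rw [← Finset.Icc_add_one_left_eq_Ioc, ← Finset.Ico_add_one_right_eq_Icc]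
    congr 1
    omega
  rw [h1, Finset.sum_Ico_eq_sum_range]
  have h2 : a+1+C - (a+1) = C := by omega
  rw [h2]

lemma adam_sum_blocks (F : ℕ → ℝ) (N : ℕ) :
    ∑ t ∈ Finset.Icc 1 (N*C), F t = ∑ k ∈ Finset.range N, ∑ j ∈ Finset.range C, F (k*C+1+j) := by
  induction N with
  | zero => simp
  | succ N ih =>
    have h1 : Finset.Icc 1 ((N+1)*C) = Finset.Ioc 0 ((N+1)*C) := by
      rw [← Finset.Icc_add_one_left_eq_Ioc, zero_add]
    have h2 : Finset.Icc 1 (N*C) = Finset.Ioc 0 (N*C) := by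
      rw [← Finset.Icc_add_one_left_eq_Ioc, zero_add]
    have h3 : (N+1)*C = N*C + C := by ring
    rw [h1, h3, ← Finset.sum_Ioc_consecutive F (Nat.zero_le (N*C)) (Nat.le_add_right _ _)]
    rw [← h2, ih, adam_sum_block_aux F (N*C), Finset.sum_range_succ]

lemma adam_e_block_sum (hC : 2 ≤ C) (k : ℕ) :
    ∑ j ∈ Finset.range C, (if (k*C+1+j) % C = 1 then (C:ℝ) else -1) = 1 := by
  obtain ⟨d, rfl⟩ : ∃ d, C = d + 1 := ⟨C - 1, by omega⟩
  rw [Finset.sum_range_succ']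
  have h1 : ∀ i ∈ Finset.range d, (if (k*(d+1)+1+(i+1)) % (d+1) = 1 then ((d+1 : ℕ):ℝ) else -1) = -1 := by
    intro i hi
    have hid := Finset.mem_range.1 hi
    rw [if_neg (adam_mod_good hC k (i+1) (by omega) (by omega))]
  rw [Finset.sum_congr rfl h1]
  have h2 : (k*(d+1)+1+0) % (d+1) = 1 := by
    simpa using adam_mod_bad hC k
  rw [if_pos h2]
  rw [Finset.sum_const, Finset.card_range, nsmul_eq_mul]
  push_cast
  ring

lemma adam_block_regret_good (hb10 : 0 ≤ beta1) (hb11 : beta1 < 1) (hb20 : 0 ≤ beta2)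
    (hb21 : beta2 < 1) (halpha : 0 < alpha) (hC : 2 ≤ C)
    (hx1 : x 1 ∈ Set.Icc (-1 : ℝ) 1)
    (hg : ∀ t, 1 ≤ t → g t = if t % C = 1 then (C : ℝ) else -1)
    (hm0 : m 0 = 0) (hm : ∀ t, 1 ≤ t → m t = beta1 * m (t - 1) + (1 - beta1) * g t)
    (hv0 : v 0 = 0) (hv : ∀ t, 1 ≤ t → v t = beta2 * v (t - 1) + (1 - beta2) * g t ^ 2)
    (hx : ∀ t, 1 ≤ t → x (t + 1) =
      max (-1) (min 1 (x t - (alpha / Real.sqrt t) * m t / Real.sqrt (v t))))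
    (k : ℕ) (hx0 : 0 ≤ x (k*C+1))
    (hsmall : (C:ℝ)^2 * ((alpha / Real.sqrt (k*C+1 : ℕ)) / Real.sqrt (1-beta2)) ≤ 1/2) :
    (1:ℝ)/2 ≤ ∑ j ∈ Finset.range C,
      (if (k*C+1+j) % C = 1 then (C:ℝ) else -1) * (x (k*C+1+j) + 1) := by
  set w := (alpha / Real.sqrt (k*C+1 : ℕ)) / Real.sqrt (1-beta2) with hwdef
  have hw0 : 0 ≤ w := by rw [hwdef]; positivity
  obtain ⟨d, hd⟩ : ∃ d, C = d + 1 := ⟨C - 1, by omega⟩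
  subst hd
  rw [Finset.sum_range_succ']
  have h2 : (k*(d+1)+1+0) % (d+1) = 1 := by simpa using adam_mod_bad hC k
  have hterm : ∀ i ∈ Finset.range d,
      (if (k*(d+1)+1+(i+1)) % (d+1) = 1 then ((d+1 : ℕ):ℝ) else -1) * (x (k*(d+1)+1+(i+1)) + 1)
      = -(x (k*(d+1)+1+(i+1)) + 1) := by
    intro i hi
    have hid := Finset.mem_range.1 hi
    rw [if_neg (adam_mod_good hC k (i+1) (by omega) (by omega))]
    ring
  rw [Finset.sum_congr rfl hterm, if_pos h2]
  have hub : ∀ i ∈ Finset.range d, -(x (k*(d+1)+1+(i+1)) + 1) ≥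
      -(x (k*(d+1)+1) + 1 + ((d+1:ℕ):ℝ) * w) := by
    intro i hi
    have := adam_within_ub hb10 hb11 hb20 hb21 halpha (by omega) hx1 hg hm0 hm hv0 hv hx
      k (i+1) (by rw [Finset.mem_range] at hi; omega)
    rw [← hwdef] at this
    have hcast : ((i:ℝ)+1) ≤ ((d:ℝ)+1) := by
      rw [Finset.mem_range] at hi
      have : (i:ℝ) ≤ d := by exact_mod_cast hi.le
      linarith
    have h3 : ((i+1 : ℕ):ℝ) * w ≤ ((d+1:ℕ):ℝ) * w := by
      push_cast
      exact mul_le_mul_of_nonneg_right (by linarith) hw0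
    push_cast at this h3 ⊢
    linarith
  have hsum : ∑ i ∈ Finset.range d, -(x (k*(d+1)+1+(i+1)) + 1) ≥
      (d:ℝ) * (-(x (k*(d+1)+1) + 1 + ((d+1:ℕ):ℝ) * w)) := by
    have := Finset.card_nsmul_le_sum (Finset.range d)
      (fun i => -(x (k*(d+1)+1+(i+1)) + 1)) (-(x (k*(d+1)+1) + 1 + ((d+1:ℕ):ℝ) * w))
      (fun i hi => hub i hi)
    rwa [Finset.card_range, nsmul_eq_mul] at this
  have hx01 : x (k*(d+1)+1+0) = x (k*(d+1)+1) := by norm_num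
  rw [hx01]
  -- total ≥ d+1)(x0+1) - d(x0+1) - d(d+1)w = x0+1 - d(d+1)w ≥ 1 - (d+1)^2 w ≥ 1/2
  have hC2 : ((d+1:ℕ):ℝ)^2 * w ≤ 1/2 := hsmall
  have hxub : x (k*(d+1)+1) ≤ 1 := (adam_x_bound hx1 hx (k*(d+1)+1) (by omega)).2
  push_cast at hC2 hsum ⊢
  nlinarith [hw0, hx0]

lemma adam_block_regret_crude (hC : 2 ≤ C)
    (hx1 : x 1 ∈ Set.Icc (-1 : ℝ) 1)
    (hx : ∀ t, 1 ≤ t → x (t + 1) =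
      max (-1) (min 1 (x t - (alpha / Real.sqrt t) * m t / Real.sqrt (v t))))
    (k : ℕ) :
    -(2*(C:ℝ)) ≤ ∑ j ∈ Finset.range C,
      (if (k*C+1+j) % C = 1 then (C:ℝ) else -1) * (x (k*C+1+j) + 1) := by
  have hterm : ∀ j ∈ Finset.range C,
      (-2 : ℝ) ≤ (if (k*C+1+j) % C = 1 then (C:ℝ) else -1) * (x (k*C+1+j) + 1) := by
    intro j hj
    have hxb := adam_x_bound hx1 hx (k*C+1+j) (by omega)
    split_ifs with h
    · have : (0:ℝ) ≤ C := Nat.cast_nonneg C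
      nlinarith [hxb.1]
    · nlinarith [hxb.2]
  have := Finset.card_nsmul_le_sum (Finset.range C) _ (-2 : ℝ) hterm
  rw [Finset.card_range, nsmul_eq_mul] at this
  linarith



-- summary lemma: total regret lower bound at block boundaries
lemma adam_total_regret (hb10 : 0 ≤ beta1) (hb11 : beta1 < 1) (hb20 : 0 ≤ beta2)
    (hb21 : beta2 < 1) (halpha : 0 < alpha) (hC : 2 ≤ C)
    (hx1 : x 1 ∈ Set.Icc (-1 : ℝ) 1)
    (hg : ∀ t, 1 ≤ t → g t = if t % C = 1 then (C : ℝ) else -1)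
    (hm0 : m 0 = 0) (hm : ∀ t, 1 ≤ t → m t = beta1 * m (t - 1) + (1 - beta1) * g t)
    (hv0 : v 0 = 0) (hv : ∀ t, 1 ≤ t → v t = beta2 * v (t - 1) + (1 - beta2) * g t ^ 2)
    (hx : ∀ t, 1 ≤ t → x (t + 1) =
      max (-1) (min 1 (x t - (alpha / Real.sqrt t) * m t / Real.sqrt (v t))))
    (K1 : ℕ) (hK1 : ∀ k, K1 ≤ k → 0 ≤ x (k*C+1))
    (K2 : ℕ) (hK2 : ∀ k, K2 ≤ k →
      (C:ℝ)^2 * ((alpha / Real.sqrt (k*C+1 : ℕ)) / Real.sqrt (1-beta2)) ≤ 1/2)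
    (N : ℕ) (hN : max K1 K2 ≤ N) :
    (N:ℝ)/2 - ((max K1 K2 : ℕ) : ℝ)*(2*C + 1/2) ≤
      ∑ t ∈ Finset.Icc 1 (N*C), (if t % C = 1 then (C:ℝ) else -1) * (x t + 1) := by
  set K := max K1 K2 with hKdef
  rw [adam_sum_blocks (fun t => (if t % C = 1 then (C:ℝ) else -1) * (x t + 1)) N]
  rw [← Finset.sum_range_add_sum_Ico _ hN]
  have hcrude : -((K:ℝ)*(2*C)) ≤ ∑ k ∈ Finset.range K, ∑ j ∈ Finset.range C,
      (if (k*C+1+j) % C = 1 then (C:ℝ) else -1) * (x (k*C+1+j) + 1) := by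
    have := Finset.card_nsmul_le_sum (Finset.range K)
      (fun k => ∑ j ∈ Finset.range C,
        (if (k*C+1+j) % C = 1 then (C:ℝ) else -1) * (x (k*C+1+j) + 1)) (-(2*(C:ℝ)))
      (fun k _ => adam_block_regret_crude hC hx1 hx k)
    rw [Finset.card_range, nsmul_eq_mul] at this
    calc -((K:ℝ)*(2*C)) = (K:ℝ) * (-(2*(C:ℝ))) := by ring
      _ ≤ _ := this
  have hgood : ((N:ℝ) - K) * (1/2) ≤ ∑ k ∈ Finset.Ico K N, ∑ j ∈ Finset.range C,
      (if (k*C+1+j) % C = 1 then (C:ℝ) else -1) * (x (k*C+1+j) + 1) := by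
    have := Finset.card_nsmul_le_sum (Finset.Ico K N)
      (fun k => ∑ j ∈ Finset.range C,
        (if (k*C+1+j) % C = 1 then (C:ℝ) else -1) * (x (k*C+1+j) + 1)) ((1:ℝ)/2)
      (fun k hk => by
        rw [Finset.mem_Ico] at hk
        exact adam_block_regret_good hb10 hb11 hb20 hb21 halpha hC hx1 hg hm0 hm hv0 hv hx k
          (hK1 k (le_trans (le_max_left _ _) hk.1))
          (hK2 k (le_trans (le_max_right _ _) hk.1)))
    rw [Nat.card_Ico, nsmul_eq_mul] at this
    calc ((N:ℝ) - K) * (1/2) = ((N - K : ℕ):ℝ) * (1/2) := by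
          rw [Nat.cast_sub hN]
      _ ≤ _ := this
  have hKN : (K:ℝ) ≤ N := by exact_mod_cast hN
  calc (N:ℝ)/2 - (K:ℝ)*(2*C + 1/2) = -((K:ℝ)*(2*C)) + ((N:ℝ) - K) * (1/2) := by ring
    _ ≤ _ := add_le_add hcrude hgood


end


/-- Non-convergence of Adam with momentum: for any `β₁, β₂ ∈ [0,1)` with `β₁ < √β₂`
and any even `C` satisfying the three stated conditions, on the online convex
optimization problem over `F = [-1,1]` with `f_t(x) = C·x` if `t mod C = 1` and
`f_t(x) = -x` otherwise, Adam with any initial step size `α > 0` has non-zero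
average regret: `R_T / T` does not converge to `0`. -/
theorem adam_nonconvergence_general
    (beta1 beta2 : ℝ)
    (hb10 : 0 ≤ beta1) (hb11 : beta1 < 1)
    (hb20 : 0 ≤ beta2) (hb21 : beta2 < 1)
    (hbb : beta1 < Real.sqrt beta2)
    (C : ℕ) (hCeven : 2 ∣ C)
    (hC1 : (1 - beta1) * beta1 ^ (C - 1) * C ≤ 1 - beta1 ^ (C - 1))
    (hC2 : beta2 ^ ((C - 2) / 2) * (C : ℝ) ^ 2 ≤ 1)
    (hC3 : 3 * (1 - beta1) / (2 * Real.sqrt (1 - beta2)) *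
        (1 + (beta1 / Real.sqrt beta2) *
          (1 - (beta1 / Real.sqrt beta2) ^ (C - 1)) / (1 - beta1 / Real.sqrt beta2)) +
        beta1 ^ (C / 2 - 1) / (1 - beta1) < (C : ℝ) / 3)
    (alpha : ℝ) (halpha : 0 < alpha)
    (f : ℕ → ℝ → ℝ)
    (hf : ∀ t, ∀ y : ℝ, f t y = if t % C = 1 then (C : ℝ) * y else -y)
    (x m v g : ℕ → ℝ)
    (hx1 : x 1 ∈ Set.Icc (-1 : ℝ) 1)
    (hm0 : m 0 = 0) (hv0 : v 0 = 0)
    -- `g t = ∇f_t(x_t)`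
    (hg : ∀ t, 1 ≤ t → g t = if t % C = 1 then (C : ℝ) else -1)
    (hm : ∀ t, 1 ≤ t → m t = beta1 * m (t - 1) + (1 - beta1) * g t)
    (hv : ∀ t, 1 ≤ t → v t = beta2 * v (t - 1) + (1 - beta2) * g t ^ 2)
    -- projected update with step size `α/√t`
    (hx : ∀ t, 1 ≤ t → x (t + 1) =
      max (-1) (min 1 (x t - (alpha / Real.sqrt t) * m t / Real.sqrt (v t)))) :
    ¬ Tendsto (fun T : ℕ =>
        ((∑ t ∈ Finset.Icc 1 T, f t (x t)) -
          sInf ((fun y => ∑ t ∈ Finset.Icc 1 T, f t y) '' Set.Icc (-1 : ℝ) 1)) / T)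
      atTop (nhds 0) := by
  intro htend
  have hC4 : 4 ≤ C := adam_C4 hb11 hb10 hb20 hb21 hbb hCeven hC2 hC3
  have hC2' : 2 ≤ C := by omega
  have hpow : beta1 ^ (C / 2 - 1) * C ≤ 1 := adam_pow_half hb10 hbb hb20 hC2 hCeven hC4
  have hD0 : 0 ≤ adamD beta1 beta2 C := adam_D_nonneg hb10 hb11 hbb
  have hDlt := adam_D_lt hb10 hb11 hb20 hb21 hbb hC4 hC3
  have hkey := adam_key hb10 hb11 hb20 hb21 hbb hC4 hCeven hC2 hpow hDlt hD0
  have hs2 : (0:ℝ) < Real.sqrt (1 + beta2) := Real.sqrt_pos.2 (by linarith)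
  have hU : adamD beta1 beta2 C < adamS beta1 beta2 C / Real.sqrt (1 + beta2) := by
    rw [lt_div_iff₀ hs2, mul_comm]
    exact hkey
  obtain ⟨K1, hK1⟩ := adam_x_eventually_nonneg hb10 hb11 hb20 hb21 hbb halpha hC4 hCeven
    hC1 hC2 hpow hU hx1 hg hm0 hm hv0 hv hx
  have hsb : (0:ℝ) < Real.sqrt (1 - beta2) := Real.sqrt_pos.2 (by linarith)
  have hCpos : (0:ℝ) < C := by exact_mod_cast (by omega : 0 < C)
  obtain ⟨K2, hK2'⟩ := adam_alpha_small (C := C) halpha (by omega)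
    (Real.sqrt (1 - beta2) / (2*(C:ℝ)^2)) (by positivity)
  have hK2 : ∀ k, K2 ≤ k →
      (C:ℝ)^2 * ((alpha / Real.sqrt (k*C+1 : ℕ)) / Real.sqrt (1-beta2)) ≤ 1/2 := by
    intro k hk
    have h1 := hK2' k hk
    have h2 : (alpha / Real.sqrt (k*C+1 : ℕ)) / Real.sqrt (1-beta2) ≤
        (Real.sqrt (1 - beta2) / (2*(C:ℝ)^2)) / Real.sqrt (1-beta2) :=
      div_le_div_of_nonneg_right h1 hsb.le
    have h3 : (Real.sqrt (1 - beta2) / (2*(C:ℝ)^2)) / Real.sqrt (1-beta2) = 1/(2*(C:ℝ)^2) := by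
      field_simp
    rw [h3] at h2
    calc (C:ℝ)^2 * ((alpha / Real.sqrt (k*C+1 : ℕ)) / Real.sqrt (1-beta2))
        ≤ (C:ℝ)^2 * (1/(2*(C:ℝ)^2)) := by
          apply mul_le_mul_of_nonneg_left h2 (by positivity)
      _ = 1/2 := by field_simp
  set K := max K1 K2 with hKdef
  set B0 := ((K : ℕ) : ℝ)*(2*(C:ℝ) + 1/2) with hB0def
  have hB00 : 0 ≤ B0 := by positivity
  -- the regret at T = N*C is at least N/2 - B0
  have hreg : ∀ N : ℕ, K ≤ N →
      (N:ℝ)/2 - B0 ≤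
        ((∑ t ∈ Finset.Icc 1 (N*C), f t (x t)) -
          sInf ((fun y => ∑ t ∈ Finset.Icc 1 (N*C), f t y) '' Set.Icc (-1 : ℝ) 1)) := by
    intro N hN
    have hNr : (0:ℝ) ≤ N := Nat.cast_nonneg N
    -- sInf = -N
    have hesum : ∑ t ∈ Finset.Icc 1 (N*C), (if t % C = 1 then (C:ℝ) else -1) = N := by
      rw [adam_sum_blocks (fun t => (if t % C = 1 then (C:ℝ) else -1)) N]
      rw [Finset.sum_congr rfl (fun k _ => adam_e_block_sum hC2' k)]
      rw [Finset.sum_const, Finset.card_range, nsmul_eq_mul, mul_one]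
    have hfy : ∀ y : ℝ, ∑ t ∈ Finset.Icc 1 (N*C), f t y = (N:ℝ) * y := by
      intro y
      have h1 : ∀ t ∈ Finset.Icc 1 (N*C), f t y =
          (if t % C = 1 then (C:ℝ) else -1) * y := by
        intro t _
        rw [hf t y]
        split_ifs <;> ring
      rw [Finset.sum_congr rfl h1, ← Finset.sum_mul, hesum]
    have hinf : sInf ((fun y => ∑ t ∈ Finset.Icc 1 (N*C), f t y) '' Set.Icc (-1 : ℝ) 1) =
        -(N:ℝ) := by
      have himg : ((fun y => ∑ t ∈ Finset.Icc 1 (N*C), f t y) '' Set.Icc (-1 : ℝ) 1) =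
          ((fun y => (N:ℝ) * y) '' Set.Icc (-1 : ℝ) 1) := by
        apply Set.image_congr
        intro y _
        exact hfy y
      rw [himg]
      apply le_antisymm
      · apply csInf_le
        · refine ⟨-(N:ℝ), ?_⟩
          rintro z ⟨y, hy, rfl⟩
          simp only
          nlinarith [hy.1, hy.2]
        · exact ⟨-1, ⟨le_refl _, by norm_num⟩, by simp⟩
      · apply le_csInf
        · exact ⟨-(N:ℝ), ⟨-1, ⟨le_refl _, by norm_num⟩, by simp⟩⟩
        · rintro z ⟨y, hy, rfl⟩
          simp only
          nlinarith [hy.1, hy.2]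
    have hfx : ∑ t ∈ Finset.Icc 1 (N*C), f t (x t) =
        ∑ t ∈ Finset.Icc 1 (N*C), (if t % C = 1 then (C:ℝ) else -1) * (x t) := by
      apply Finset.sum_congr rfl
      intro t _
      rw [hf t (x t)]
      split_ifs <;> ring
    have hsplit : ∑ t ∈ Finset.Icc 1 (N*C), (if t % C = 1 then (C:ℝ) else -1) * (x t + 1) =
        (∑ t ∈ Finset.Icc 1 (N*C), (if t % C = 1 then (C:ℝ) else -1) * (x t)) + N := by
      rw [← hesum, ← Finset.sum_add_distrib]
      apply Finset.sum_congr rfl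
      intro t _
      ring
    have htot := adam_total_regret hb10 hb11 hb20 hb21 halpha hC2' hx1 hg hm0 hm hv0 hv hx
      K1 hK1 K2 hK2 N hN
    rw [hinf, hfx]
    rw [← hKdef] at htot
    linarith [htot, hsplit.symm.le, hsplit.le]
  -- contradiction with convergence
  have hδ : (0:ℝ) < 1/(4*C) := by positivity
  have hev : ∀ᶠ T : ℕ in atTop,
      ((∑ t ∈ Finset.Icc 1 T, f t (x t)) -
          sInf ((fun y => ∑ t ∈ Finset.Icc 1 T, f t y) '' Set.Icc (-1 : ℝ) 1)) / T
        < 1/(4*C) := htend.eventually (gt_mem_nhds hδ)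
  obtain ⟨T0, hT0⟩ := eventually_atTop.1 hev
  set N := max (max K (Nat.ceil (4*B0) + 1)) (T0 + 1) with hNdef
  have hNK : K ≤ N := le_trans (le_max_left _ _) (le_max_left _ _)
  have hN4B : 4*B0 ≤ N := by
    calc (4*B0 : ℝ) ≤ Nat.ceil (4*B0) := Nat.le_ceil _
      _ ≤ (N:ℝ) := by
          have : Nat.ceil (4*B0) ≤ N := le_trans (by omega) (le_max_left _ _)
          exact_mod_cast this
  have hNT0 : T0 ≤ N*C := by
    have h1 : T0 ≤ N := le_trans (by omega) (le_max_right _ _)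
    calc T0 ≤ N := h1
      _ = N * 1 := (Nat.mul_one N).symm
      _ ≤ N * C := Nat.mul_le_mul_left N (by omega)
  have hNpos : 0 < N := by
    have : T0 + 1 ≤ N := le_max_right _ _
    omega
  have hNrpos : (0:ℝ) < N := by exact_mod_cast hNpos
  have hlow := hreg N hNK
  have hup := hT0 (N*C) hNT0
  have hTpos : (0:ℝ) < ((N*C : ℕ) : ℝ) := by
    have : 0 < N*C := by positivity
    exact_mod_cast this
  have hR4 : (N:ℝ)/4 ≤ ((∑ t ∈ Finset.Icc 1 (N*C), f t (x t)) -
        sInf ((fun y => ∑ t ∈ Finset.Icc 1 (N*C), f t y) '' Set.Icc (-1 : ℝ) 1)) := by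
    have : (N:ℝ)/4 ≤ (N:ℝ)/2 - B0 := by linarith
    linarith
  have hdiv : 1/(4*(C:ℝ)) ≤ ((∑ t ∈ Finset.Icc 1 (N*C), f t (x t)) -
        sInf ((fun y => ∑ t ∈ Finset.Icc 1 (N*C), f t y) '' Set.Icc (-1 : ℝ) 1)) /
        ((N*C : ℕ) : ℝ) := by
    rw [le_div_iff₀ hTpos]
    have hcast : ((N*C : ℕ) : ℝ) = (N:ℝ)*(C:ℝ) := by push_cast; ring
    rw [hcast]
    calc 1/(4*(C:ℝ)) * ((N:ℝ)*(C:ℝ)) = (N:ℝ)/4 := by field_simp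
      _ ≤ _ := hR4
  linarith [hup, hdiv]
end
end

section
/- Let 0 ≤ β₁ < 1 and let g₁, …, g_T ∈ ℝ^d. Define m₀ = 0 and m_t = β₁·m_{t−1} + (1−β₁)·g_t for t ≥ 1. Then Σ_{t=1}^T ‖m_t‖² ≤ Σ_{t=1}^T ‖g_t‖², where ‖·‖ is the Euclidean norm on ℝ^d. -/
/-! By convexity of `‖·‖²`, `a t := ‖m t‖²` satisfies `a t ≤ β a (t-1) + (1-β) ‖g t‖²`.
Summing over `t` and telescoping gives
`(1-β) Σ a + β a T ≤ (1-β) Σ ‖g t‖² + β a 0`, and `a 0 = 0 ≤ a T`. -/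

open Finset

lemma norm_sq_convex_comb_le {E : Type*} [SeminormedAddCommGroup E] [NormedSpace ℝ E]
    {b : ℝ} (hb0 : 0 ≤ b) (hb1 : b ≤ 1) (x y : E) :
    ‖b • x + (1 - b) • y‖ ^ 2 ≤ b * ‖x‖ ^ 2 + (1 - b) * ‖y‖ ^ 2 :=
  ((convexOn_norm convex_univ).pow (fun _ _ => norm_nonneg _) 2).2
    (Set.mem_univ x) (Set.mem_univ y) hb0 (by linarith) (by ring)

section Recursion

variable {a b : ℕ → ℝ} {β : ℝ}

lemma sum_Icc_add_le_of_le_convex_comb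
    (ha : ∀ t, a (t + 1) ≤ β * a t + (1 - β) * b (t + 1)) (N : ℕ) :
    (1 - β) * ∑ t ∈ Icc 1 N, a t + β * a N ≤ (1 - β) * ∑ t ∈ Icc 1 N, b t + β * a 0 := by
  induction N with
  | zero => simp
  | succ n ih =>
    rw [sum_Icc_succ_top (by omega), sum_Icc_succ_top (by omega)]
    linarith [ha n]

lemma sum_Icc_le_of_le_convex_comb (hβ0 : 0 ≤ β) (hβ1 : β < 1)
    (ha0 : a 0 = 0) (ha_nonneg : ∀ t, 0 ≤ a t)
    (ha : ∀ t, a (t + 1) ≤ β * a t + (1 - β) * b (t + 1)) (N : ℕ) :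
    ∑ t ∈ Icc 1 N, a t ≤ ∑ t ∈ Icc 1 N, b t := by
  have h := sum_Icc_add_le_of_le_convex_comb ha N
  rw [ha0, mul_zero, add_zero] at h
  have : (1 - β) * ∑ t ∈ Icc 1 N, a t ≤ (1 - β) * ∑ t ∈ Icc 1 N, b t := by
    linarith [mul_nonneg hβ0 (ha_nonneg N)]
  exact le_of_mul_le_mul_left this (by linarith)

end Recursion

/-- For the exponential moving average `m_t = β₁·m_{t-1} + (1-β₁)·g_t` with `m₀ = 0`
and `0 ≤ β₁ < 1`, we have `Σ_{t=1}^T ‖m_t‖² ≤ Σ_{t=1}^T ‖g_t‖²`. -/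
theorem ema_sum_sq_norm_le
    (d T : ℕ) (beta1 : ℝ) (h0 : 0 ≤ beta1) (h1 : beta1 < 1)
    (g m : ℕ → EuclideanSpace ℝ (Fin d))
    (hm0 : m 0 = 0)
    (hm : ∀ t, 1 ≤ t → m t = beta1 • m (t - 1) + (1 - beta1) • g t) :
    ∑ t ∈ Finset.Icc 1 T, ‖m t‖ ^ 2 ≤ ∑ t ∈ Finset.Icc 1 T, ‖g t‖ ^ 2 := by
  refine sum_Icc_le_of_le_convex_comb h0 h1 (by simp [hm0]) (fun t => by positivity)
    (fun t => ?_) T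
  rw [hm (t + 1) (by omega), Nat.add_sub_cancel]
  exact norm_sq_convex_comb_le h0 h1.le _ _
end

section
/- Fix T ∈ ℕ, 0 ≤ β₁ < 1, a sequence β_{1t} ∈ [0, β₁] for t ∈ [T], G₂ > 0, and R∞ > 0. Let g₁, …, g_T ∈ ℝ^d with ‖g_t‖ ≤ G₂, define m₀ = 0 and m_t = β_{1t}·m_{t−1} + (1−β_{1t})·g_t, and let η_t ∈ ℝ^d have positive coordinates satisfying √t·‖η_t‖∞ ≤ R∞ for each t. Then Σ_{t=1}^{T} [ (1/(2(1−β_{1t})))·‖η_t^{1/2} ⊙ m_t‖² + (β_{1t}/(2(1−β_{1t})))·‖η_t^{1/2} ⊙ m_{t−1}‖² ] ≤ (2√T − 1)·R∞·G₂²/(1−β₁), where ⊙ denotes elementwise product, η_t^{1/2} the elementwise square root, and ‖·‖ the Euclidean norm. -/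
/-! Since `m_t` is a convex combination of `m_{t-1}` and `g_t`, induction keeps every `m_t` in the
ball of radius `G₂`. Each weighted square norm is then at most `‖η_t‖∞·G₂² ≤ R∞·G₂²/√t`, and the
momentum weights satisfy `(1 + β_{1t}) / (2(1 - β_{1t})) ≤ 1 / (1 - β₁)`, so the `t`-th summand is
at most `R∞·G₂²/((1 - β₁)√t)`. Summing, `∑_{t ≤ T} 1/√t ≤ 2√T - 1` by telescoping
`1/√(t+1) ≤ 2(√(t+1) - √t)`. -/

open Finset

theorem Convex.mem_of_ema_recursion {E : Type*} [AddCommGroup E] [Module ℝ E] {s : Set E}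
    (hs : Convex ℝ s) {T : ℕ} {b : ℕ → ℝ} {g m : ℕ → E}
    (hb : ∀ t ∈ Icc 1 T, 0 ≤ b t ∧ b t ≤ 1) (hg : ∀ t ∈ Icc 1 T, g t ∈ s) (hm0 : m 0 ∈ s)
    (hm : ∀ t ∈ Icc 1 T, m t = b t • m (t - 1) + (1 - b t) • g t) :
    ∀ t ≤ T, m t ∈ s := by
  intro t
  induction t with
  | zero => exact fun _ => hm0
  | succ n ih =>
    intro hn
    have ht : n + 1 ∈ Icc 1 T := Finset.mem_Icc.2 ⟨by omega, hn⟩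
    obtain ⟨hb0, hb1⟩ := hb _ ht
    rw [hm _ ht, Nat.add_sub_cancel]
    exact hs (ih (by omega)) (hg _ ht) hb0 (sub_nonneg.2 hb1) (add_sub_cancel _ _)

theorem sum_sq_sqrt_mul_le {ι : Type*} [Fintype ι] {w : ι → ℝ} (hw : ∀ i, 0 ≤ w i)
    (v : EuclideanSpace ℝ ι) : ∑ i, (√(w i) * v i) ^ 2 ≤ ‖w‖ * ‖v‖ ^ 2 := by
  rw [EuclideanSpace.real_norm_sq_eq, mul_sum]
  refine sum_le_sum fun i _ => ?_
  rw [mul_pow, Real.sq_sqrt (hw i)]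
  gcongr
  exact (le_abs_self _).trans (norm_le_pi_norm w i)

theorem one_div_sqrt_add_one_le {x : ℝ} (hx : 0 ≤ x) :
    1 / √(x + 1) ≤ 2 * √(x + 1) - 2 * √x := by
  have hpos : 0 < √(x + 1) := Real.sqrt_pos.2 (by linarith)
  have hmono : √x ≤ √(x + 1) := Real.sqrt_le_sqrt (by linarith)
  rw [div_le_iff₀ hpos]
  nlinarith [Real.sq_sqrt hx, Real.sq_sqrt (by linarith : 0 ≤ x + 1), sq_nonneg (√x - √(x + 1))]

theorem sum_Icc_one_div_sqrt_le {T : ℕ} (hT : 1 ≤ T) :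
    ∑ t ∈ Icc 1 T, 1 / √(t : ℝ) ≤ 2 * √(T : ℝ) - 1 := by
  induction T, hT using Nat.le_induction with
  | base => norm_num
  | succ n _ ih =>
    rw [sum_Icc_succ_top (by omega), Nat.cast_succ]
    linarith [one_div_sqrt_add_one_le (Nat.cast_nonneg (α := ℝ) n)]

theorem momentum_weighted_add_le {b β A B C : ℝ} (hb0 : 0 ≤ b) (hbβ : b ≤ β) (hβ : β < 1)
    (hA : A ≤ C) (hB : B ≤ C) (hC : 0 ≤ C) :
    1 / (2 * (1 - b)) * A + b / (2 * (1 - b)) * B ≤ C / (1 - β) := by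
  have hb : 0 < 1 - b := by linarith
  calc 1 / (2 * (1 - b)) * A + b / (2 * (1 - b)) * B
      ≤ 1 / (2 * (1 - b)) * C + b / (2 * (1 - b)) * C := by gcongr
    _ = (1 + b) / (2 * (1 - b)) * C := by ring
    _ ≤ 1 / (1 - β) * C := by
        refine mul_le_mul_of_nonneg_right ?_ hC
        rw [div_le_div_iff₀ (by positivity) (by linarith)]
        nlinarith
    _ = C / (1 - β) := one_div_mul_eq_div _ _

theorem adabound_momentum_term_bound_general
    (d T : ℕ) (hT : 1 ≤ T)
    (beta1 : ℝ) (h1 : beta1 < 1)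
    (beta1t : ℕ → ℝ)
    (hb1t : ∀ t ∈ Finset.Icc 1 T, 0 ≤ beta1t t ∧ beta1t t ≤ beta1)
    (G2 Rinf : ℝ) (hG2 : 0 < G2) (hRinf : 0 < Rinf)
    (g m : ℕ → EuclideanSpace ℝ (Fin d))
    (hg : ∀ t ∈ Finset.Icc 1 T, ‖g t‖ ≤ G2)
    (hm0 : m 0 = 0)
    (hm : ∀ t ∈ Finset.Icc 1 T, m t = beta1t t • m (t - 1) + (1 - beta1t t) • g t)
    (eta : ℕ → Fin d → ℝ)
    (hetapos : ∀ t ∈ Finset.Icc 1 T, ∀ i, 0 < eta t i)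
    (heta : ∀ t ∈ Finset.Icc 1 T, Real.sqrt t * ‖eta t‖ ≤ Rinf) :
    ∑ t ∈ Finset.Icc 1 T,
        (1 / (2 * (1 - beta1t t)) * ∑ i, (Real.sqrt (eta t i) * m t i) ^ 2 +
          beta1t t / (2 * (1 - beta1t t)) * ∑ i, (Real.sqrt (eta t i) * m (t - 1) i) ^ 2) ≤
      (2 * Real.sqrt T - 1) * Rinf * G2 ^ 2 / (1 - beta1) := by
  have hm_le : ∀ t ≤ T, ‖m t‖ ≤ G2 := by
    simpa using (convex_closedBall (0 : EuclideanSpace ℝ (Fin d)) G2).mem_of_ema_recursion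
      (fun t ht => ⟨(hb1t t ht).1, (hb1t t ht).2.trans h1.le⟩)
      (fun t ht => by simpa using hg t ht) (by simpa [hm0] using hG2.le) hm
  have hterm : ∀ t ∈ Icc 1 T,
      1 / (2 * (1 - beta1t t)) * ∑ i, (√(eta t i) * m t i) ^ 2 +
          beta1t t / (2 * (1 - beta1t t)) * ∑ i, (√(eta t i) * m (t - 1) i) ^ 2 ≤
        Rinf * G2 ^ 2 / (1 - beta1) * (1 / √(t : ℝ)) := by
    intro t ht
    have ht' := Finset.mem_Icc.1 ht
    have hsqrt : 0 < √(t : ℝ) := Real.sqrt_pos.2 (by exact_mod_cast ht'.1)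
    have heta_le : ‖eta t‖ ≤ Rinf / √(t : ℝ) := by
      rw [le_div_iff₀ hsqrt, mul_comm]
      exact heta t ht
    have hweighted : ∀ s ≤ T, ∑ i, (√(eta t i) * m s i) ^ 2 ≤ ‖eta t‖ * G2 ^ 2 := fun s hs =>
      (sum_sq_sqrt_mul_le (fun i => (hetapos t ht i).le) (m s)).trans
        (by gcongr; exact hm_le s hs)
    calc _ ≤ ‖eta t‖ * G2 ^ 2 / (1 - beta1) :=
          momentum_weighted_add_le (hb1t t ht).1 (hb1t t ht).2 h1 (hweighted t ht'.2)
            (hweighted (t - 1) (by omega)) (by positivity)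
      _ ≤ Rinf / √(t : ℝ) * G2 ^ 2 / (1 - beta1) := by gcongr
      _ = Rinf * G2 ^ 2 / (1 - beta1) * (1 / √(t : ℝ)) := by ring
  calc _ ≤ ∑ t ∈ Icc 1 T, Rinf * G2 ^ 2 / (1 - beta1) * (1 / √(t : ℝ)) := sum_le_sum hterm
    _ ≤ Rinf * G2 ^ 2 / (1 - beta1) * (2 * √(T : ℝ) - 1) := by
        rw [← mul_sum]
        gcongr
        exact sum_Icc_one_div_sqrt_le hT
    _ = (2 * √(T : ℝ) - 1) * Rinf * G2 ^ 2 / (1 - beta1) := by ring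

/-- The momentum term bound in the AdaBound regret analysis: with first-moment
estimates `m_t = β_{1t}·m_{t-1} + (1-β_{1t})·g_t` (`m₀ = 0`, `β_{1t} ≤ β₁ < 1`),
gradients bounded by `G₂` in Euclidean norm, and per-coordinate learning rates
`η_t` with positive coordinates satisfying `√t·‖η_t‖∞ ≤ R∞`, one has
`Σ_{t=1}^T [ ‖η_t^{1/2}⊙m_t‖²/(2(1-β_{1t})) + β_{1t}·‖η_t^{1/2}⊙m_{t-1}‖²/(2(1-β_{1t})) ]
  ≤ (2√T - 1)·R∞·G₂²/(1-β₁)`. -/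
theorem adabound_momentum_term_bound
    (d T : ℕ) (hT : 1 ≤ T)
    (beta1 : ℝ) (h0 : 0 ≤ beta1) (h1 : beta1 < 1)
    (beta1t : ℕ → ℝ)
    (hb1t : ∀ t ∈ Finset.Icc 1 T, 0 ≤ beta1t t ∧ beta1t t ≤ beta1)
    (G2 Rinf : ℝ) (hG2 : 0 < G2) (hRinf : 0 < Rinf)
    (g m : ℕ → EuclideanSpace ℝ (Fin d))
    (hg : ∀ t ∈ Finset.Icc 1 T, ‖g t‖ ≤ G2)
    (hm0 : m 0 = 0)
    (hm : ∀ t ∈ Finset.Icc 1 T, m t = beta1t t • m (t - 1) + (1 - beta1t t) • g t)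
    (eta : ℕ → Fin d → ℝ)
    (hetapos : ∀ t ∈ Finset.Icc 1 T, ∀ i, 0 < eta t i)
    (heta : ∀ t ∈ Finset.Icc 1 T, Real.sqrt t * ‖eta t‖ ≤ Rinf) :
    ∑ t ∈ Finset.Icc 1 T,
        (1 / (2 * (1 - beta1t t)) * ∑ i, (Real.sqrt (eta t i) * m t i) ^ 2 +
          beta1t t / (2 * (1 - beta1t t)) * ∑ i, (Real.sqrt (eta t i) * m (t - 1) i) ^ 2) ≤
      (2 * Real.sqrt T - 1) * Rinf * G2 ^ 2 / (1 - beta1) :=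
  adabound_momentum_term_bound_general d T hT beta1 h1 beta1t hb1t G2 Rinf hG2 hRinf g m hg hm0 hm
    eta hetapos heta
end

section
/- Fix t ∈ ℕ, 0 ≤ β_{1t} < 1, and let F ⊆ ℝ^d be a nonempty closed convex set. Let η_t ∈ ℝ^d have positive coordinates, let m_{t−1}, g_t ∈ ℝ^d, set m_t = β_{1t}·m_{t−1} + (1−β_{1t})·g_t, and let x_t ∈ F. Let x_{t+1} be the minimizer over x ∈ F of ‖η_t^{-1/2} ⊙ (x − (x_t − η_t ⊙ m_t))‖ (the projection of the AdaBound step onto F in the diag(η_t^{-1})-norm). Then for every x* ∈ F: ⟨g_t, x_t − x*⟩ ≤ (1/(2(1−β_{1t})))·[ ‖η_t^{-1/2} ⊙ (x_t − x*)‖² − ‖η_t^{-1/2} ⊙ (x_{t+1} − x*)‖² ] + (1/(2(1−β_{1t})))·‖η_t^{1/2} ⊙ m_t‖² + (β_{1t}/(2(1−β_{1t})))·‖η_t^{1/2} ⊙ m_{t−1}‖² + (β_{1t}/(2(1−β_{1t})))·‖η_t^{-1/2} ⊙ (x_t − x*)‖², where ⊙ is elementwise product, η_t^{±1/2} are elementwise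 powers, ⟨·,·⟩ the Euclidean inner product, and ‖·‖ the Euclidean norm. -/
/-!
The substitution `x ↦ η^{-1/2} ⊙ x` for points and `m ↦ η^{1/2} ⊙ m` for momenta turns the
`diag(η⁻¹)`-projection into a Euclidean projection onto a convex set and `⟨g, x⟩` into an inner
product, so it suffices to prove the unweighted inequality in a real inner product space. There,
the obtuse-angle characterization of the projection `p` of `x - m` gives
`‖p - x*‖² ≤ ‖x - m - x*‖² = ‖x - x*‖² - 2⟪m, x - x*⟫ + ‖m‖²`; splitting `⟪m, x - x*⟫` along
`m = β m' + (1 - β) g` and bounding `-⟪m', x - x*⟫` by Young's inequality gives the claim.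
-/

open RealInnerProductSpace

section ProjectedStep

variable {E : Type*} [NormedAddCommGroup E] [InnerProductSpace ℝ E]

theorem Convex.norm_sub_sq_le_of_isMinOn {K : Set E} (hK : Convex ℝ K) {y p z : E} (hp : p ∈ K)
    (hmin : IsMinOn (fun w => ‖w - y‖) K p) (hz : z ∈ K) : ‖p - z‖ ^ 2 ≤ ‖y - z‖ ^ 2 := by
  have : Nonempty K := ⟨⟨p, hp⟩⟩
  have hinf : ‖y - p‖ = ⨅ w : K, ‖y - w‖ :=
    le_antisymm (le_ciInf fun w => by simpa only [norm_sub_rev y] using isMinOn_iff.1 hmin w w.2)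
      (ciInf_le ⟨0, Set.forall_mem_range.2 fun _ => norm_nonneg _⟩ (⟨p, hp⟩ : K))
  have hobtuse : ⟪y - p, z - p⟫ ≤ 0 := (norm_eq_iInf_iff_real_inner_le_zero hK hp).1 hinf z hz
  have hsplit : ‖y - z‖ ^ 2 = ‖y - p‖ ^ 2 - 2 * ⟪y - p, z - p⟫ + ‖p - z‖ ^ 2 := by
    rw [← sub_add_sub_cancel y p z, norm_add_sq_real, ← neg_sub z p, inner_neg_right]
    ring
  linarith [sq_nonneg ‖y - p‖]

theorem inner_le_of_isMinOn_momentum_step {K : Set E} (hK : Convex ℝ K) {β : ℝ}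
    (hβ0 : 0 ≤ β) (hβ1 : β < 1) {m' g m x p xs : E} (hm : m = β • m' + (1 - β) • g)
    (hp : p ∈ K) (hmin : IsMinOn (fun w => ‖w - (x - m)‖) K p) (hxs : xs ∈ K) :
    ⟪g, x - xs⟫ ≤
      1 / (2 * (1 - β)) * (‖x - xs‖ ^ 2 - ‖p - xs‖ ^ 2) + 1 / (2 * (1 - β)) * ‖m‖ ^ 2 +
        β / (2 * (1 - β)) * ‖m'‖ ^ 2 + β / (2 * (1 - β)) * ‖x - xs‖ ^ 2 := by
  set a := x - xs
  have hnonexp : ‖p - xs‖ ^ 2 ≤ ‖a‖ ^ 2 - 2 * ⟪m, a⟫ + ‖m‖ ^ 2 := by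
    calc ‖p - xs‖ ^ 2 ≤ ‖x - m - xs‖ ^ 2 := hK.norm_sub_sq_le_of_isMinOn hp hmin hxs
      _ = ‖a‖ ^ 2 - 2 * ⟪m, a⟫ + ‖m‖ ^ 2 := by
        rw [sub_right_comm, norm_sub_sq_real, real_inner_comm]
  have hmomentum : ⟪m, a⟫ = β * ⟪m', a⟫ + (1 - β) * ⟪g, a⟫ := by
    rw [hm, inner_add_left, real_inner_smul_left, real_inner_smul_left]
  have hyoung : -⟪m', a⟫ ≤ (‖m'‖ ^ 2 + ‖a‖ ^ 2) / 2 := by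
    linarith [norm_add_sq_real m' a, sq_nonneg ‖m' + a‖]
  have hβ : 0 < 1 - β := by linarith
  field_simp
  linarith [mul_le_mul_of_nonneg_left hyoung hβ0]

end ProjectedStep

section DiagonalScaling

variable {ι : Type*}

def diagToEuclidean (w : ι → ℝ) : (ι → ℝ) →ₗ[ℝ] EuclideanSpace ℝ ι where
  toFun x := WithLp.toLp 2 (w * x)
  map_add' x y := by rw [mul_add, WithLp.toLp_add]
  map_smul' c x := by rw [mul_smul_comm, WithLp.toLp_smul, RingHom.id_apply]

@[simp]
theorem diagToEuclidean_apply (w x : ι → ℝ) (i : ι) : diagToEuclidean w x i = w i * x i := rfl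

theorem norm_diagToEuclidean [Fintype ι] (w x : ι → ℝ) :
    ‖diagToEuclidean w x‖ = √(∑ i, (w i * x i) ^ 2) := by
  simp only [EuclideanSpace.norm_eq, diagToEuclidean_apply, Real.norm_eq_abs, sq_abs]

theorem norm_diagToEuclidean_sq [Fintype ι] (w x : ι → ℝ) :
    ‖diagToEuclidean w x‖ ^ 2 = ∑ i, (w i * x i) ^ 2 := by
  simp [EuclideanSpace.real_norm_sq_eq]

theorem inner_diagToEuclidean [Fintype ι] {v w : ι → ℝ} (hvw : ∀ i, v i * w i = 1)
    (x y : ι → ℝ) :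
    ⟪diagToEuclidean v x, diagToEuclidean w y⟫ = ∑ i, x i * y i := by
  simp only [PiLp.inner_apply, diagToEuclidean_apply, RCLike.inner_apply, conj_trivial]
  refine Finset.sum_congr rfl fun i _ => ?_
  linear_combination x i * y i * hvw i

end DiagonalScaling

theorem adabound_per_step_inequality_general
    (d : ℕ) (beta1t : ℝ) (h0 : 0 ≤ beta1t) (h1 : beta1t < 1)
    (F : Set (Fin d → ℝ)) (hFcv : Convex ℝ F)
    (eta : Fin d → ℝ) (heta : ∀ i, 0 < eta i)
    (mprev g mt : Fin d → ℝ)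
    (hmt : ∀ i, mt i = beta1t * mprev i + (1 - beta1t) * g i)
    (xt : Fin d → ℝ)
    (xnext : Fin d → ℝ)
    (hxnextF : xnext ∈ F)
    -- `xnext` minimizes `‖η^{-1/2} ⊙ (x - (x_t - η ⊙ m_t))‖` over `x ∈ F`
    (hxnext : ∀ z ∈ F,
      Real.sqrt (∑ i, ((Real.sqrt (eta i))⁻¹ * (xnext i - (xt i - eta i * mt i))) ^ 2) ≤
        Real.sqrt (∑ i, ((Real.sqrt (eta i))⁻¹ * (z i - (xt i - eta i * mt i))) ^ 2)) :
    ∀ xs ∈ F,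
      ∑ i, g i * (xt i - xs i) ≤
        1 / (2 * (1 - beta1t)) *
            ((∑ i, ((Real.sqrt (eta i))⁻¹ * (xt i - xs i)) ^ 2) -
              ∑ i, ((Real.sqrt (eta i))⁻¹ * (xnext i - xs i)) ^ 2) +
          1 / (2 * (1 - beta1t)) * ∑ i, (Real.sqrt (eta i) * mt i) ^ 2 +
          beta1t / (2 * (1 - beta1t)) * ∑ i, (Real.sqrt (eta i) * mprev i) ^ 2 +
          beta1t / (2 * (1 - beta1t)) * ∑ i, ((Real.sqrt (eta i))⁻¹ * (xt i - xs i)) ^ 2 := by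
  intro xs hxs
  set u : Fin d → ℝ := fun i => (√(eta i))⁻¹
  set v : Fin d → ℝ := fun i => √(eta i)
  have huv (i : Fin d) : v i * u i = 1 := mul_inv_cancel₀ (Real.sqrt_pos.2 (heta i)).ne'
  have hstep :
      diagToEuclidean u (xt - eta * mt) = diagToEuclidean u xt - diagToEuclidean v mt := by
    rw [map_sub]
    congr 1
    ext i
    simp only [diagToEuclidean_apply, Pi.mul_apply, u, v]
    rw [← mul_assoc, inv_mul_eq_div, Real.div_sqrt]
  have hmin : IsMinOn (fun w => ‖w - (diagToEuclidean u xt - diagToEuclidean v mt)‖)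
      (diagToEuclidean u '' F) (diagToEuclidean u xnext) := by
    rw [isMinOn_iff]
    rintro _ ⟨z, hz, rfl⟩
    rw [← hstep, ← map_sub, ← map_sub, norm_diagToEuclidean, norm_diagToEuclidean]
    exact hxnext z hz
  have hm : diagToEuclidean v mt =
      beta1t • diagToEuclidean v mprev + (1 - beta1t) • diagToEuclidean v g := by
    ext i
    simp only [diagToEuclidean_apply, PiLp.add_apply, PiLp.smul_apply, smul_eq_mul, hmt]
    ring
  have key := inner_le_of_isMinOn_momentum_step (hFcv.linear_image _) h0 h1 hm
    (Set.mem_image_of_mem _ hxnextF) hmin (Set.mem_image_of_mem _ hxs)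
  simpa only [← map_sub, norm_diagToEuclidean_sq, inner_diagToEuclidean huv, Pi.sub_apply, u, v]
    using key

/-- The per-step inequality in the AdaBound regret analysis: if
`m_t = β_{1t}·m_{t-1} + (1-β_{1t})·g_t` and `x_{t+1}` is the projection of
`x_t - η_t ⊙ m_t` onto `F` in the `diag(η_t⁻¹)`-norm, then for every `x* ∈ F`,
`⟨g_t, x_t - x*⟩` is bounded by the stated combination of weighted squared norms. -/
theorem adabound_per_step_inequality
    (d : ℕ) (t : ℕ) (beta1t : ℝ) (h0 : 0 ≤ beta1t) (h1 : beta1t < 1)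
    (F : Set (Fin d → ℝ)) (hFne : F.Nonempty) (hFcl : IsClosed F) (hFcv : Convex ℝ F)
    (eta : Fin d → ℝ) (heta : ∀ i, 0 < eta i)
    (mprev g mt : Fin d → ℝ)
    (hmt : ∀ i, mt i = beta1t * mprev i + (1 - beta1t) * g i)
    (xt : Fin d → ℝ) (hxt : xt ∈ F)
    (xnext : Fin d → ℝ)
    (hxnextF : xnext ∈ F)
    -- `xnext` minimizes `‖η^{-1/2} ⊙ (x - (x_t - η ⊙ m_t))‖` over `x ∈ F`
    (hxnext : ∀ z ∈ F,
      Real.sqrt (∑ i, ((Real.sqrt (eta i))⁻¹ * (xnext i - (xt i - eta i * mt i))) ^ 2) ≤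
        Real.sqrt (∑ i, ((Real.sqrt (eta i))⁻¹ * (z i - (xt i - eta i * mt i))) ^ 2)) :
    ∀ xs ∈ F,
      ∑ i, g i * (xt i - xs i) ≤
        1 / (2 * (1 - beta1t)) *
            ((∑ i, ((Real.sqrt (eta i))⁻¹ * (xt i - xs i)) ^ 2) -
              ∑ i, ((Real.sqrt (eta i))⁻¹ * (xnext i - xs i)) ^ 2) +
          1 / (2 * (1 - beta1t)) * ∑ i, (Real.sqrt (eta i) * mt i) ^ 2 +
          beta1t / (2 * (1 - beta1t)) * ∑ i, (Real.sqrt (eta i) * mprev i) ^ 2 +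
          beta1t / (2 * (1 - beta1t)) * ∑ i, ((Real.sqrt (eta i))⁻¹ * (xt i - xs i)) ^ 2 :=
  adabound_per_step_inequality_general d beta1t h0 h1 F hFcv eta heta mprev g mt hmt xt xnext
    hxnextF hxnext
end
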